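/- arXiv:1606.05268 — 6 statements merged into one kernel-verified Lean document; each statement's English description precedes it below -/
import Mathlib

section
/- Let A be a finite alphabet of cardinality q ≥ 2, and let C ⊆ A^n be a code of cardinality m, where m ≥ 5 or m = 3, with an encoding bijection λ : M → C. Then the subgroup Iso(C) ≤ S(M) is closed under the action on P_2. -/
/-- Partitions of `Fin m` are represented as finsets of finsets. -/
abbrev Ptn (m : ℕ) := Finset (Finset (Fin m))

/-- `α` is a partition of `Fin m`: all classes are nonempty and every element
belongs to exactly one class. -/
def IsPartition {m : ℕ} (α : Ptn m) : Prop :=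
  (∀ c ∈ α, c.Nonempty) ∧ ∀ i : Fin m, ∃! c, c ∈ α ∧ i ∈ c

/-- `P`: the set of partitions of `M = Fin m` into at most `q` nonempty classes. -/
def Pset (m q : ℕ) : Set (Ptn m) :=
  {α | IsPartition α ∧ α.card ≤ q}

/-- `P₂`: the partitions of the form `{{i,j}, M ∖ {i,j}}` for 2-element subsets `{i,j}`. -/
def P2set (m : ℕ) : Set (Ptn m) :=
  {α | ∃ p : Finset (Fin m), p.card = 2 ∧ α = {p, pᶜ}}

/-- `O` as a set: the 2-element subsets of `M = Fin m`. -/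
def Oset (m : ℕ) : Set (Finset (Fin m)) := {p | p.card = 2}

/-- `O` as a type: the 2-element subsets of `M = Fin m`. -/
abbrev OO (m : ℕ) := {p : Finset (Fin m) // p.card = 2}

/-- `P` as a type. -/
abbrev PP (m q : ℕ) := {α : Ptn m // α ∈ Pset m q}

noncomputable instance (m q : ℕ) : Fintype (PP m q) := Fintype.ofFinite _

/-- The canonical action of `S(M)` on partitions: `g({c₁,…,cₜ}) = {g(c₁),…,g(cₜ)}`. -/
def permPart {m : ℕ} (g : Equiv.Perm (Fin m)) (α : Ptn m) : Ptn m :=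
  α.image fun c => c.image g

/-- The canonical action of `S(M)` on subsets of `M`. -/
def permPair {m : ℕ} (g : Equiv.Perm (Fin m)) (p : Finset (Fin m)) : Finset (Fin m) :=
  p.image g

/-- `H` is closed under the action `act` on `S` if every `g` that maps each
`H`-orbit of `S` onto itself belongs to `H`. -/
def ClosedUnder {m : ℕ} {X : Type*} (act : Equiv.Perm (Fin m) → X → X) (S : Set X)
    (H : Set (Equiv.Perm (Fin m))) : Prop :=
  ∀ g : Equiv.Perm (Fin m), (∀ x ∈ S, ∃ h ∈ H, act g x = act h x) → g ∈ H

section Code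

variable {m n : ℕ} {A : Type*} [Fintype A] [DecidableEq A]

/-- A map `h : Aⁿ → Aⁿ` is monomial if `h(a) = (σ₁(a_{π(1)}), …, σₙ(a_{π(n)}))`
for a permutation `π ∈ Sₙ` and permutations `σ₁,…,σₙ` of `A`. -/
def IsMonomial (h : (Fin n → A) → (Fin n → A)) : Prop :=
  ∃ (π : Equiv.Perm (Fin n)) (σ : Fin n → Equiv.Perm A),
    ∀ (a : Fin n → A) (k : Fin n), h a k = σ k (a (π k))

/-- `Iso(C)`: the permutations `g` of the messages such that `λ ∘ g ∘ λ⁻¹` is a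
Hamming isometry of the code encoded by `lam`. -/
def IsoSet (lam : Fin m → Fin n → A) : Set (Equiv.Perm (Fin m)) :=
  {g | ∀ i j : Fin m, hammingDist (lam (g i)) (lam (g j)) = hammingDist (lam i) (lam j)}

/-- `Mon(C)`: the elements of `Iso(C)` such that `λ ∘ g ∘ λ⁻¹` extends to a
monomial map of `Aⁿ`. -/
def MonSet (lam : Fin m → Fin n → A) : Set (Equiv.Perm (Fin m)) :=
  {g | g ∈ IsoSet lam ∧
    ∃ h : (Fin n → A) → (Fin n → A), IsMonomial h ∧ ∀ i : Fin m, h (lam i) = lam (g i)}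

/-- `Ψ(x) = {x⁻¹(a) : a ∈ A} ∖ {∅}`, the partition of `M` induced by `x : M → A`. -/
def PsiF (x : Fin m → A) : Ptn m :=
  (Finset.univ.image fun a : A => Finset.univ.filter fun i : Fin m => x i = a).erase ∅

/-- The multiplicity function `η_λ(α) = |{k : Ψ(λ_k) = α}|`. -/
def eta (lam : Fin m → Fin n → A) (α : Ptn m) : ℚ :=
  (((Finset.univ : Finset (Fin n)).filter fun k => PsiF (fun i => lam i k) = α).card : ℚ)

/-- The multiplicity function, restricted to `P`. -/
def etaP (q : ℕ) (lam : Fin m → Fin n → A) : PP m q → ℚ := fun α => eta lam α.1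

end Code

open Classical in
/-- `Δ_α({i,j}) = 0` if `i` and `j` lie in the same class of `α`, and `1` otherwise. -/
noncomputable def Delta {m q : ℕ} (α : PP m q) (p : OO m) : ℚ :=
  if ∃ c ∈ α.1, p.1 ⊆ c then 0 else 1

/-- The linear map `W : F(P,ℚ) → F(O,ℚ)`, `W(η)(p) = Σ_{α∈P} η(α)Δ_α(p)`. -/
noncomputable def WLin (m q : ℕ) : (PP m q → ℚ) →ₗ[ℚ] (OO m → ℚ) where
  toFun η := fun p => ∑ α : PP m q, η α * Delta α p
  map_add' x y := by
    funext p
    simp [add_mul, Finset.sum_add_distrib]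
  map_smul' c x := by
    funext p
    simp [Finset.mul_sum, mul_assoc]

/-- The matrix `B`: `B_{p,t} = 1` if `|p ∩ t| = 1`, and `0` otherwise. -/
def Bmat (m : ℕ) : Matrix (OO m) (OO m) ℚ :=
  Matrix.of fun p t => if (p.1 ∩ t.1).card = 1 then 1 else 0

/-- The matrix `D`: `2(m−2)(m−4)·D_{p,t}` equals `−m²+8m−14` if `p = t`,
`m−4` if `|p∩t| = 1`, and `−2` if `p ∩ t = ∅`. -/
def Dmat (m : ℕ) : Matrix (OO m) (OO m) ℚ :=
  Matrix.of fun p t =>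
    (if p = t then -(m : ℚ) ^ 2 + 8 * m - 14
      else if (p.1 ∩ t.1).card = 1 then (m : ℚ) - 4 else -2) /
      (2 * ((m : ℚ) - 2) * ((m : ℚ) - 4))

/-- `ξ_x = Σ_{r∈O} x(r) Σ_{p∈O} D_{r,p} · id_{{p, M∖p}}`. -/
noncomputable def xi (m q : ℕ) (x : OO m → ℚ) : PP m q → ℚ := fun α =>
  ∑ r : OO m, x r * ∑ p : OO m, Dmat m r p * (if α.1 = ({p.1, p.1ᶜ} : Ptn m) then 1 else 0)

/-- `ζ_α = id_α − ξ_{Δ_α}`. -/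
noncomputable def zeta (m q : ℕ) (α : PP m q) : PP m q → ℚ :=
  (fun β => if β = α then 1 else 0) - xi m q fun p => Delta α p

/-- `V₀`: the functions in `F(P,ℚ)` vanishing on `P ∖ P₂`. -/
def V0 (m q : ℕ) : Set (PP m q → ℚ) :=
  {η | ∀ α : PP m q, (α : Ptn m) ∉ P2set m → η α = 0}

open Classical in
/-- `id_{P₂} = Σ_{α∈P₂} id_α`. -/
noncomputable def idP2 (m q : ℕ) : PP m q → ℚ := fun α =>
  if (α : Ptn m) ∈ P2set m then 1 else 0

theorem permPart_mem_Pset {m q : ℕ} (g : Equiv.Perm (Fin m)) {α : Ptn m}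
    (hα : α ∈ Pset m q) : permPart g α ∈ Pset m q := by
  obtain ⟨⟨hne, huniq⟩, hcard⟩ := hα
  refine ⟨⟨?_, ?_⟩, le_trans Finset.card_image_le hcard⟩
  · intro c hc
    simp only [permPart, Finset.mem_image] at hc
    obtain ⟨d, hd, rfl⟩ := hc
    exact (hne d hd).image g
  · intro i
    obtain ⟨c, ⟨hc, hic⟩, hun⟩ := huniq (g.symm i)
    refine ⟨c.image g, ⟨?_, ?_⟩, ?_⟩
    · simp only [permPart, Finset.mem_image]
      exact ⟨c, hc, rfl⟩
    · exact Finset.mem_image.2 ⟨g.symm i, hic, g.apply_symm_apply i⟩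
    · rintro d ⟨hd, hid⟩
      simp only [permPart, Finset.mem_image] at hd
      obtain ⟨e, he, rfl⟩ := hd
      rw [Finset.mem_image] at hid
      obtain ⟨j, hj, hji⟩ := hid
      have hjs : j = g.symm i := by
        apply g.injective
        rw [hji, g.apply_symm_apply]
      subst hjs
      rw [hun e ⟨he, hj⟩]

/-- The action of `S(M)` on `P`. -/
def permPP {m q : ℕ} (g : Equiv.Perm (Fin m)) (α : PP m q) : PP m q :=
  ⟨permPart g α.1, permPart_mem_Pset g α.2⟩

/-- The action of `S(M)` on `F(P,ℚ)`: `g(η)(α) = η(g⁻¹(α))`. -/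
def permF {m q : ℕ} (g : Equiv.Perm (Fin m)) (η : PP m q → ℚ) : PP m q → ℚ :=
  fun α => η (permPP g⁻¹ α)

/-- `Stab(η) = {g ∈ S(M) : g(η) = η}`. -/
def StabSet {m q : ℕ} (η : PP m q → ℚ) : Set (Equiv.Perm (Fin m)) :=
  {g | permF g η = η}

/-- `Stab_W(η) = {g ∈ S(M) : W(g(η)) = W(η)}`. -/
def StabWSet (m q : ℕ) (η : PP m q → ℚ) : Set (Equiv.Perm (Fin m)) :=
  {g | WLin m q (permF g η) = WLin m q η}

/-- For a code of cardinality `m` (`m ≥ 5` or `m = 3`) over an alphabet of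
cardinality `q ≥ 2`, the group `Iso(C)` is closed under the action on `P₂`. -/
theorem iso_closed_under_P2 {A : Type*} [Fintype A] [DecidableEq A]
    (hq : 2 ≤ Fintype.card A) {m n : ℕ} (hm : 5 ≤ m ∨ m = 3) (hn : 0 < n)
    (lam : Fin m → Fin n → A) (hlam : Function.Injective lam) :
    ClosedUnder permPart (P2set m) (IsoSet lam) := by
  intro g hg
  intro i j
  rcases eq_or_ne i j with rfl | hij
  · simp
  -- the pair
  set p : Finset (Fin m) := {i, j} with hp
  have hpcard : p.card = 2 := by
    rw [hp, Finset.card_insert_of_notMem (by simpa using hij), Finset.card_singleton]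
  have hαP2 : ({p, pᶜ} : Ptn m) ∈ P2set m := ⟨p, hpcard, rfl⟩
  obtain ⟨h, hIso, heq⟩ := hg _ hαP2
  have hperm : ∀ (f : Equiv.Perm (Fin m)),
      permPart f ({p, pᶜ} : Ptn m) = {p.image f, pᶜ.image f} := by
    intro f
    simp [permPart, Finset.image_insert]
  rw [hperm g, hperm h] at heq
  have hmem : p.image g ∈ ({p.image h, pᶜ.image h} : Ptn m) := by
    rw [← heq]; exact Finset.mem_insert_self _ _
  have hcg : (p.image g).card = 2 := by
    rw [Finset.card_image_of_injective _ g.injective, hpcard]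
  have hcc : (pᶜ.image h).card = m - 2 := by
    rw [Finset.card_image_of_injective _ h.injective, Finset.card_compl, hpcard]
    simp
  have hne2 : m - 2 ≠ 2 := by omega
  have hgp : p.image g = p.image h := by
    rcases Finset.mem_insert.1 hmem with h1 | h1
    · exact h1
    · exfalso
      rw [Finset.mem_singleton.1 h1, hcc] at hcg
      exact hne2 hcg
  -- {g i, g j} = {h i, h j}
  have hpair : ({g i, g j} : Finset (Fin m)) = {h i, h j} := by
    simpa [hp, Finset.image_insert] using hgp
  have hgi : g i ∈ ({h i, h j} : Finset (Fin m)) := by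
    rw [← hpair]; exact Finset.mem_insert_self _ _
  have hgj : g j ∈ ({h i, h j} : Finset (Fin m)) := by
    rw [← hpair]; simp
  have hgij : g i ≠ g j := fun e => hij (g.injective e)
  have key : hammingDist (lam (g i)) (lam (g j)) = hammingDist (lam (h i)) (lam (h j)) := by
    rcases Finset.mem_insert.1 hgi with e1 | e1
    · have e2 : g j = h j := by
        rcases Finset.mem_insert.1 hgj with e2 | e2
        · exact absurd (e1.trans e2.symm) hgij
        · exact Finset.mem_singleton.1 e2
      rw [e1, e2]
    · have e1 : g i = h j := Finset.mem_singleton.1 e1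
      have e2 : g j = h i := by
        rcases Finset.mem_insert.1 hgj with e2 | e2
        · exact e2
        · exact absurd (e1.trans (Finset.mem_singleton.1 e2).symm) hgij
      rw [e1, e2, hammingDist_comm]
  rw [key, hIso i j]
end

section
/- Let A be a finite alphabet of cardinality q ≥ 2, and let C ⊆ A^n be a code of cardinality m, where m ≥ 5 or m = 3, with an encoding bijection λ : M → C. Then there exists a subgroup H ≤ S(M) that is closed under the action on P∖P_2 such that Mon(C) = H ∩ Iso(C). -/
/-!
Encode the code by its multiplicity function `η`, which counts how often each partition of `M`
is induced by a coordinate. Two encodings differ by a monomial map exactly when their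
multiplicity functions agree, so `Mon(C) = Stab(η) ∩ Iso(C)`. Take `H` to be the stabilizer of
the restriction of `η` to `P ∖ P₂`; as the stabilizer of a function supported on an invariant
set, it is closed under the action on that set.

If `g ∈ H ∩ Iso(C)`, then `g(η) - η` is supported on `P₂`, and it is killed by `W` because
`W(η)` lists the Hamming distances between codewords. On functions supported on `P₂ ≅ O`, `W`
acts by the matrix `B`, which has trivial kernel unless `m ∈ {2, 4}`: for `ψ` in the kernel,
`2ψ{i,j} = S(i) + S(j)` with `S(i)` the sum of `ψ` over the pairs containing `i`, whence
`(4 - m) S(i) = Σ S`, so `S` vanishes and then so does `ψ`.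
-/

open scoped Pointwise
open Finset Matrix

attribute [local instance] arrowAction

lemma exists_perm_apply_eq_iff {ι A : Type*} [Fintype A] (x y : ι → A) :
    (∃ σ : Equiv.Perm A, ∀ i, σ (x i) = y i) ↔ ∀ i j, x i = x j ↔ y i = y j := by
  refine ⟨fun ⟨σ, hσ⟩ i j => by rw [← hσ, ← hσ, σ.injective.eq_iff], fun h => ?_⟩
  have hext : ∀ i, Function.extend x y id (x i) = y i :=
    Function.FactorsThrough.extend_apply (fun i j => (h i j).1) id
  obtain ⟨e, he⟩ := Set.MapsTo.exists_equiv_extend_of_card_eq (t := univ) (s := Set.range x)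
    (f := Function.extend x y id) card_univ.symm (fun _ _ => mem_coe.2 (mem_univ _))
    (by
      rintro _ ⟨i, rfl⟩ _ ⟨j, rfl⟩ hij
      rw [hext, hext] at hij
      rw [(h i j).2 hij])
  exact ⟨e.trans (Equiv.subtypeUnivEquiv mem_univ), fun i => (he _ ⟨i, rfl⟩).trans (hext i)⟩

lemma exists_perm_comp_eq_iff_card_filter_eq {ι β : Type*} [Fintype ι] [DecidableEq β]
    (f g : ι → β) :
    (∃ π : Equiv.Perm ι, ∀ k, f (π k) = g k) ↔ ∀ b, #{k | f k = b} = #{k | g k = b} := by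
  simp only [← Fintype.card_subtype]
  refine ⟨fun ⟨π, hπ⟩ b => Fintype.card_congr (π.subtypeEquiv fun k => ?_).symm,
    fun h => ?_⟩
  · rw [hπ]
  · exact ⟨Equiv.ofFiberEquiv fun b => Fintype.equivOfCardEq (h b).symm,
      Equiv.ofFiberEquiv_map _⟩

lemma card_inter_pair_eq_one_iff {α : Type*} [DecidableEq α] {i j : α} (hij : i ≠ j)
    (p : Finset α) : #(p ∩ {i, j}) = 1 ↔ ¬(i ∈ p ↔ j ∈ p) := by
  by_cases hi : i ∈ p <;> by_cases hj : j ∈ p <;>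
    simp [inter_insert_of_mem, inter_insert_of_notMem, hi, hj, hij]

lemma exists_ne_and_eq_pair {α : Type*} [DecidableEq α] {p : Finset α} (hp : #p = 2) {i : α}
    (hi : i ∈ p) : ∃ j, i ≠ j ∧ p = {i, j} := by
  obtain ⟨j, hj⟩ := card_eq_one.1 (by rw [card_erase_of_mem hi, hp] : #(p.erase i) = 1)
  exact ⟨j, (ne_of_mem_erase (hj ▸ mem_singleton_self j)).symm,
    by rw [← insert_erase hi, hj]⟩

section Action

variable {m : ℕ}

lemma permPart_eq_smul (g : Equiv.Perm (Fin m)) (α : Ptn m) : permPart g α = g • α := rfl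

lemma arrow_smul_apply {M : Type*} (g : Equiv.Perm (Fin m)) (F : Ptn m → M) (α : Ptn m) :
    (g • F) α = F (g⁻¹ • α) := rfl

lemma smul_mem_iff_of_smul_mem {S : Set (Ptn m)}
    (hS : ∀ (g : Equiv.Perm (Fin m)) α, α ∈ S → g • α ∈ S) (g : Equiv.Perm (Fin m))
    (α : Ptn m) :
    g • α ∈ S ↔ α ∈ S :=
  ⟨fun h => by simpa using hS g⁻¹ _ h, hS g α⟩

lemma smul_mem_P2set (g : Equiv.Perm (Fin m)) {α : Ptn m} (hα : α ∈ P2set m) :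
    g • α ∈ P2set m := by
  obtain ⟨p, hp, rfl⟩ := hα
  refine ⟨g • p, by rw [card_smul_finset, hp], ?_⟩
  rw [smul_finset_insert, smul_finset_singleton, compl_eq_univ_sdiff, smul_finset_sdiff,
    smul_finset_univ, ← compl_eq_univ_sdiff]

lemma smul_mem_Pset_diff_P2set_iff (q : ℕ) (g : Equiv.Perm (Fin m)) (α : Ptn m) :
    g • α ∈ Pset m q \ P2set m ↔ α ∈ Pset m q \ P2set m :=
  smul_mem_iff_of_smul_mem (fun g _ hα =>
    Set.mem_sdiff_of_mem (permPart_mem_Pset g hα.1)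
      fun h => hα.2 (by simpa using smul_mem_P2set g⁻¹ h)) g α

lemma inv_smul_indicator {M : Type*} [Zero M] {S : Set (Ptn m)}
    (hS : ∀ (g : Equiv.Perm (Fin m)) α, g • α ∈ S ↔ α ∈ S) (g : Equiv.Perm (Fin m))
    (f : Ptn m → M) : g⁻¹ • S.indicator f = S.indicator fun α => f (g • α) := by
  funext α
  rw [arrow_smul_apply, inv_inv]
  by_cases hα : α ∈ S
  · rw [Set.indicator_of_mem hα, Set.indicator_of_mem ((hS g α).2 hα)]
  · rw [Set.indicator_of_notMem hα, Set.indicator_of_notMem (mt (hS g α).1 hα)]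

lemma closedUnder_stabilizer_indicator {M : Type*} [Zero M] {S : Set (Ptn m)}
    (hS : ∀ (g : Equiv.Perm (Fin m)) α, g • α ∈ S ↔ α ∈ S) (f : Ptn m → M) :
    ClosedUnder permPart S (MulAction.stabilizer (Equiv.Perm (Fin m)) (S.indicator f)) := by
  intro g hg
  rw [SetLike.mem_coe, MulAction.mem_stabilizer_iff, ← inv_inv g, inv_smul_indicator hS]
  refine Set.indicator_congr fun α hα => ?_
  obtain ⟨h, hh, hgh⟩ := hg (g⁻¹ • α) ((hS _ _).2 hα)
  have hgα : g⁻¹ • α = h⁻¹ • α := by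
    rw [permPart_eq_smul, permPart_eq_smul, smul_inv_smul] at hgh
    rw [eq_inv_smul_iff, ← hgh]
  have hfix := congrFun (MulAction.mem_stabilizer_iff.1 hh) α
  rwa [arrow_smul_apply, ← hgα, Set.indicator_of_mem ((hS _ _).2 hα),
    Set.indicator_of_mem hα] at hfix

end Action

section Partition

variable {m : ℕ} {A : Type*} [Fintype A] [DecidableEq A]

lemma psiF_eq_image (x : Fin m → A) :
    PsiF x = univ.image fun i => univ.filter fun j => x j = x i := by
  ext c
  simp only [PsiF, mem_erase, mem_image, mem_univ, true_and]
  constructor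
  · rintro ⟨hne, a, rfl⟩
    obtain ⟨i, hi⟩ := nonempty_iff_ne_empty.2 hne
    exact ⟨i, by simp_all⟩
  · rintro ⟨i, rfl⟩
    exact ⟨ne_empty_of_mem (a := i) (by simp), x i, rfl⟩

lemma psiF_mem_Pset (x : Fin m → A) : PsiF x ∈ Pset m (Fintype.card A) := by
  refine ⟨⟨?_, fun i => ⟨univ.filter fun j => x j = x i, ?_, ?_⟩⟩,
    card_erase_le.trans card_image_le⟩
  all_goals simp only [psiF_eq_image, mem_image, mem_univ, true_and, and_imp,
    forall_exists_index, forall_apply_eq_imp_iff]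
  · exact fun i => ⟨i, by simp⟩
  · simp
  · intro j hij
    ext k
    simp_all

lemma eta_eq_zero_of_notMem_Pset {n : ℕ} (lam : Fin m → Fin n → A) {α : Ptn m}
    (hα : α ∉ Pset m (Fintype.card A)) : eta lam α = 0 := by
  rw [eta, Nat.cast_eq_zero, card_eq_zero, filter_eq_empty_iff]
  exact fun k _ hk => hα (hk ▸ psiF_mem_Pset _)

lemma psiF_eq_psiF_iff {x y : Fin m → A} :
    PsiF x = PsiF y ↔ ∀ i j, x i = x j ↔ y i = y j := by
  refine ⟨fun h i j => ?_, fun h => ?_⟩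
  · have hmem : (univ.filter fun j => x j = x i) ∈ PsiF y := by
      rw [← h, psiF_eq_image]
      exact mem_image_of_mem _ (mem_univ i)
    rw [psiF_eq_image] at hmem
    obtain ⟨l, -, hl⟩ := mem_image.1 hmem
    have hi : y i = y l := by simpa using congrArg (i ∈ ·) hl
    have hj : y j = y l ↔ x j = x i := by simpa using congrArg (j ∈ ·) hl
    rw [hi, eq_comm, ← hj, eq_comm]
  · rw [psiF_eq_image, psiF_eq_image]
    exact image_congr fun i _ => by ext j; simp [h]

lemma psiF_comp_perm (x : Fin m → A) (g : Equiv.Perm (Fin m)) :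
    PsiF (fun i => x (g i)) = g⁻¹ • PsiF x := by
  have hfiber : ∀ i, (univ.filter fun j => x (g j) = x (g i)) =
      g⁻¹ • univ.filter fun j => x j = x (g i) := by
    intro i
    ext j
    simp [mem_inv_smul_finset_iff, Equiv.Perm.smul_def]
  rw [psiF_eq_image, psiF_eq_image, smul_finset_def, image_image]
  simp_rw [hfiber]
  change univ.image ((fun i => g⁻¹ • univ.filter fun j => x j = x i) ∘ g) = _
  rw [← image_image, image_univ_equiv]
  rfl

end Partition

section Monomial

variable {m n : ℕ} {A : Type*} [Fintype A] [DecidableEq A]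

lemma eta_comp_perm (lam : Fin m → Fin n → A) (g : Equiv.Perm (Fin m)) :
    eta (fun i => lam (g i)) = fun α => eta lam (g • α) := by
  funext α
  simp only [eta]
  congr 2
  ext k
  have hk := psiF_comp_perm (fun i => lam i k) g
  rw [mem_filter, mem_filter, hk, inv_smul_eq_iff]

lemma exists_monomial_iff_eta_eq (lam mu : Fin m → Fin n → A) :
    (∃ h, IsMonomial h ∧ ∀ i, h (lam i) = mu i) ↔ eta mu = eta lam := by
  have hcols : (∃ h, IsMonomial h ∧ ∀ i, h (lam i) = mu i) ↔
      ∃ π : Equiv.Perm (Fin n), ∀ k, PsiF (fun i => lam i (π k)) = PsiF fun i => mu i k := by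
    simp only [psiF_eq_psiF_iff, ← exists_perm_apply_eq_iff]
    constructor
    · rintro ⟨h, ⟨π, σ, hσ⟩, hlam⟩
      exact ⟨π, fun k => ⟨σ k, fun i => by rw [← hlam, hσ]⟩⟩
    · rintro ⟨π, hπ⟩
      choose σ hσ using hπ
      exact ⟨fun a k => σ k (a (π k)), ⟨π, σ, fun _ _ => rfl⟩,
        fun i => funext fun k => hσ k i⟩
  rw [hcols, exists_perm_comp_eq_iff_card_filter_eq (fun k => PsiF fun i => lam i k)
    (fun k => PsiF fun i => mu i k), funext_iff]
  simp only [eta, Nat.cast_inj]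
  exact forall_congr' fun α => eq_comm

lemma mem_MonSet_iff (lam : Fin m → Fin n → A) (g : Equiv.Perm (Fin m)) :
    g ∈ MonSet lam ↔ g ∈ IsoSet lam ∧ eta (fun i => lam (g i)) = eta lam :=
  and_congr_right fun _ => exists_monomial_iff_eta_eq lam _

end Monomial

section PairMatrix

variable {m : ℕ}

lemma Bmat_apply_of_eq_pair (p : OO m) {t : OO m} {i j : Fin m} (hij : i ≠ j)
    (ht : t.1 = {i, j}) :
    Bmat m p t = (if i ∈ p.1 then 1 else 0) + (if j ∈ p.1 then 1 else 0)
      - 2 * if p = t then 1 else 0 := by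
  have hpt : p = t ↔ i ∈ p.1 ∧ j ∈ p.1 := by
    rw [Subtype.ext_iff, ht]
    refine ⟨fun h => by simp [h], fun ⟨hi, hj⟩ => (eq_of_subset_of_card_le ?_ ?_).symm⟩
    · exact insert_subset_iff.2 ⟨hi, singleton_subset_iff.2 hj⟩
    · rw [p.2, card_pair hij]
  simp only [Bmat, of_apply, ht, card_inter_pair_eq_one_iff hij]
  by_cases hi : i ∈ p.1 <;> by_cases hj : j ∈ p.1 <;> simp [hi, hj, hpt, one_add_one_eq_two]

def pairFun (ψ : OO m → ℚ) (i j : Fin m) : ℚ :=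
  if h : i ≠ j then ψ ⟨{i, j}, card_pair h⟩ else 0

lemma sum_pairFun (ψ : OO m → ℚ) (i : Fin m) :
    ∑ j, pairFun ψ i j = ∑ p : OO m, if i ∈ p.1 then ψ p else 0 := by
  rw [← sum_filter, ← sum_filter_of_ne (p := (i ≠ ·)) fun j _ h => by
    by_contra hij
    simp [pairFun, hij] at h]
  refine sum_bij (fun j hj => ⟨{i, j}, card_pair (mem_filter.1 hj).2⟩) (fun j _ => by simp)
    (fun j hj j' hj' h => ?_) (fun p hp => ?_) (fun j hj => dif_pos (mem_filter.1 hj).2)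
  · have hjj' : ({i, j} : Finset (Fin m)) = {i, j'} := congrArg Subtype.val h
    have : j ∈ ({i, j'} : Finset (Fin m)) := hjj' ▸ by simp
    simpa [(mem_filter.1 hj).2.symm] using this
  · obtain ⟨j, hij, hp⟩ := exists_ne_and_eq_pair p.2 (mem_filter.1 hp).2
    exact ⟨j, by simp [hij], Subtype.ext hp.symm⟩

lemma vecMul_Bmat_apply (ψ : OO m → ℚ) {i j : Fin m} (hij : i ≠ j) :
    (ψ ᵥ* Bmat m) ⟨{i, j}, card_pair hij⟩ =
      ∑ k, pairFun ψ i k + ∑ k, pairFun ψ j k - 2 * pairFun ψ i j := by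
  simp only [vecMul, dotProduct, Bmat_apply_of_eq_pair _ (t := ⟨{i, j}, card_pair hij⟩) hij rfl,
    mul_sub, mul_add, mul_ite, mul_one, mul_zero, sum_sub_distrib, sum_add_distrib, sum_pairFun]
  rw [Fintype.sum_ite_eq', pairFun, dif_pos hij, mul_comm]

lemma eq_zero_of_two_mul_eq_sum_add_sum (hm2 : m ≠ 2) (hm4 : m ≠ 4)
    {f : Fin m → Fin m → ℚ}
    (hdiag : ∀ i, f i i = 0) (hf : ∀ i j, i ≠ j → 2 * f i j = ∑ k, f i k + ∑ k, f j k)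
    (i j : Fin m) : f i j = 0 := by
  set S : Fin m → ℚ := fun i => ∑ k, f i k
  have hS : ∀ i, (4 - m) * S i = ∑ k, S k := by
    intro i
    have : ∑ k, (S i + S k - 2 * f i k) = 2 * S i := by
      rw [sum_eq_single i (fun k _ hki => by rw [hf i k hki.symm, sub_self]) (by simp), hdiag]
      ring
    rw [sum_sub_distrib, sum_add_distrib, ← mul_sum, sum_const, card_univ, Fintype.card_fin,
      nsmul_eq_mul] at this
    linarith
  have hm2' : (4 - 2 * m : ℚ) ≠ 0 := by
    intro h; apply hm2; exact_mod_cast (by linarith : (m : ℚ) = 2)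
  have hm4' : (4 - m : ℚ) ≠ 0 := by
    intro h; apply hm4; exact_mod_cast (by linarith : (m : ℚ) = 4)
  have hT : ∑ k, S k = 0 := by
    have := sum_congr rfl fun i (_ : i ∈ univ) => hS i
    rw [← mul_sum, sum_const, card_univ, Fintype.card_fin, nsmul_eq_mul] at this
    exact (mul_eq_zero.1 (by linarith : (4 - 2 * m : ℚ) * ∑ k, S k = 0)).resolve_left hm2'
  have hS0 : ∀ i, S i = 0 := fun i =>
    (mul_eq_zero.1 ((hS i).trans hT)).resolve_left hm4'
  rcases eq_or_ne i j with rfl | hij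
  · exact hdiag i
  · have := hf i j hij
    simp only [S] at hS0
    rw [hS0, hS0] at this
    linarith

lemma eq_zero_of_vecMul_Bmat_eq_zero (hm2 : m ≠ 2) (hm4 : m ≠ 4) {ψ : OO m → ℚ}
    (h : ψ ᵥ* Bmat m = 0) : ψ = 0 := by
  have hpair := eq_zero_of_two_mul_eq_sum_add_sum hm2 hm4 (f := pairFun ψ)
    (fun i => by simp [pairFun]) fun i j hij => by
      have := congrFun h ⟨{i, j}, card_pair hij⟩
      rw [vecMul_Bmat_apply ψ hij, Pi.zero_apply] at this
      linarith
  funext p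
  obtain ⟨i, j, hij, hp⟩ := card_eq_two.1 p.2
  have hp' : p = ⟨{i, j}, card_pair hij⟩ := Subtype.ext hp
  have := hpair i j
  rwa [pairFun, dif_pos hij, ← hp'] at this

end PairMatrix

section PairPartition

variable {m q : ℕ}

lemma pair_compl_mem_Pset (hm3 : 3 ≤ m) (hq : 2 ≤ q) {p : Finset (Fin m)} (hp : #p = 2) :
    ({p, pᶜ} : Ptn m) ∈ Pset m q := by
  have hpc : pᶜ.Nonempty := card_pos.1 (by rw [card_compl, Fintype.card_fin, hp]; omega)
  refine ⟨⟨?_, fun i => ?_⟩, card_le_two.trans hq⟩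
  · simp only [mem_insert, mem_singleton, forall_eq_or_imp, forall_eq]
    exact ⟨card_pos.1 (by omega), hpc⟩
  · by_cases hi : i ∈ p
    · refine ⟨p, by simp [hi], fun c ⟨hc, hic⟩ => ?_⟩
      rcases mem_insert.1 hc with rfl | hc
      · rfl
      · simp_all [mem_singleton.1 hc]
    · refine ⟨pᶜ, by simp [hi], fun c ⟨hc, hic⟩ => ?_⟩
      rcases mem_insert.1 hc with rfl | hc
      · exact absurd hic hi
      · exact mem_singleton.1 hc

def pairPartition (hm3 : 3 ≤ m) (hq : 2 ≤ q) (p : OO m) : PP m q :=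
  ⟨{p.1, p.1ᶜ}, pair_compl_mem_Pset hm3 hq p.2⟩

lemma pairPartition_injective (hm3 : 3 ≤ m) (hm4 : m ≠ 4) (hq : 2 ≤ q) :
    Function.Injective (pairPartition (q := q) hm3 hq) := by
  intro p t hpt
  have hpt' : ({p.1, p.1ᶜ} : Ptn m) = {t.1, t.1ᶜ} := congrArg Subtype.val hpt
  have hp : p.1 ∈ ({t.1, t.1ᶜ} : Ptn m) := hpt' ▸ mem_insert_self _ _
  rcases mem_insert.1 hp with h | h
  · exact Subtype.ext h
  · have := congrArg card (mem_singleton.1 h)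
    rw [p.2, card_compl, Fintype.card_fin, t.2] at this
    omega

lemma Delta_pairPartition (hm3 : 3 ≤ m) (hq : 2 ≤ q) (p t : OO m) :
    Delta (pairPartition hm3 hq p) t = Bmat m p t := by
  obtain ⟨i, j, hij, ht⟩ := card_eq_two.1 t.2
  have hsub : (∃ c ∈ (pairPartition hm3 hq p).1, {i, j} ⊆ c) ↔
      (i ∈ p.1 ↔ j ∈ p.1) := by
    simp only [pairPartition, mem_insert, mem_singleton, exists_eq_or_imp, exists_eq_left,
      insert_subset_iff, singleton_subset_iff, mem_compl]
    tauto
  simp only [Delta, Bmat, of_apply, ht, hsub, card_inter_pair_eq_one_iff hij]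
  split_ifs <;> tauto

lemma WLin_eq_vecMul_Bmat (hm3 : 3 ≤ m) (hm4 : m ≠ 4) (hq : 2 ≤ q) {φ : PP m q → ℚ}
    (hφ : φ ∈ V0 m q) : WLin m q φ = (fun p => φ (pairPartition hm3 hq p)) ᵥ* Bmat m := by
  funext t
  refine (Fintype.sum_of_injective _ (pairPartition_injective hm3 hm4 hq) _ _
    (fun α hα => ?_) fun p => by rw [Delta_pairPartition]).symm
  rw [hφ α fun ⟨p, hp, hαp⟩ => hα ⟨⟨p, hp⟩, Subtype.ext hαp.symm⟩, zero_mul]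

lemma eq_zero_of_mem_V0_of_WLin_eq_zero (hm3 : 3 ≤ m) (hm4 : m ≠ 4) (hq : 2 ≤ q)
    {φ : PP m q → ℚ} (hφ : φ ∈ V0 m q) (hW : WLin m q φ = 0) : φ = 0 := by
  have hψ := eq_zero_of_vecMul_Bmat_eq_zero (by omega) hm4
    ((WLin_eq_vecMul_Bmat hm3 hm4 hq hφ).symm.trans hW)
  funext α
  by_cases hα : α.1 ∈ P2set m
  · obtain ⟨p, hp, hαp⟩ := hα
    rw [show α = pairPartition hm3 hq ⟨p, hp⟩ from Subtype.ext hαp]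
    exact congrFun hψ ⟨p, hp⟩
  · exact hφ α hα

end PairPartition

section Distance

variable {m n : ℕ} {A : Type*} [Fintype A] [DecidableEq A]

lemma Delta_psiF (x : Fin m → A) {t : OO m} {i j : Fin m} (ht : t.1 = {i, j}) :
    Delta ⟨PsiF x, psiF_mem_Pset x⟩ t = if x i = x j then 0 else 1 := by
  have hsub : (∃ c ∈ PsiF x, {i, j} ⊆ c) ↔ x i = x j := by
    simp only [psiF_eq_image, mem_image, mem_univ, true_and, exists_exists_eq_and,
      insert_subset_iff, singleton_subset_iff, mem_filter]
    exact ⟨fun ⟨l, hi, hj⟩ => hi.trans hj.symm, fun h => ⟨j, h, rfl⟩⟩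
  simp only [Delta, ht, hsub]

lemma WLin_etaP_apply (lam : Fin m → Fin n → A) {t : OO m} {i j : Fin m} (ht : t.1 = {i, j}) :
    WLin m (Fintype.card A) (etaP (Fintype.card A) lam) t = hammingDist (lam i) (lam j) := by
  set col : Fin n → PP m (Fintype.card A) := fun k => ⟨PsiF fun i => lam i k, psiF_mem_Pset _⟩
  have heta : ∀ α, etaP (Fintype.card A) lam α = #{k | col k = α} := fun α => by
    simp only [etaP, eta, col, Subtype.ext_iff]
  calc WLin m _ (etaP _ lam) t = ∑ α, ∑ k with col k = α, Delta (col k) t := by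
        refine sum_congr rfl fun α _ => ?_
        rw [heta, sum_congr rfl fun k hk => by rw [(mem_filter.1 hk).2], sum_const, nsmul_eq_mul]
    _ = ∑ k, Delta (col k) t := sum_fiberwise _ _ _
    _ = ∑ k, if lam i k = lam j k then 0 else 1 :=
        sum_congr rfl fun k _ => Delta_psiF (fun i => lam i k) ht
    _ = hammingDist (lam i) (lam j) := by
        rw [hammingDist, sum_ite, sum_const_zero, zero_add, sum_const, nsmul_one]

lemma WLin_etaP_eq_of_hammingDist_eq {lam mu : Fin m → Fin n → A}
    (hdist : ∀ i j, hammingDist (mu i) (mu j) = hammingDist (lam i) (lam j)) :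
    WLin m (Fintype.card A) (etaP (Fintype.card A) mu) =
      WLin m (Fintype.card A) (etaP (Fintype.card A) lam) := by
  funext t
  obtain ⟨i, j, -, ht⟩ := card_eq_two.1 t.2
  rw [WLin_etaP_apply mu ht, WLin_etaP_apply lam ht, hdist]

lemma eta_eq_of_hammingDist_eq_of_indicator_eq (hm3 : 3 ≤ m) (hm4 : m ≠ 4)
    (hq : 2 ≤ Fintype.card A) {lam mu : Fin m → Fin n → A}
    (hdist : ∀ i j, hammingDist (mu i) (mu j) = hammingDist (lam i) (lam j))
    (heq : (Pset m (Fintype.card A) \ P2set m).indicator (eta mu) =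
      (Pset m (Fintype.card A) \ P2set m).indicator (eta lam)) :
    eta mu = eta lam := by
  have hV0 : etaP _ mu - etaP _ lam ∈ V0 m (Fintype.card A) := fun α hα => by
    have hmem : α.1 ∈ Pset m (Fintype.card A) \ P2set m := ⟨α.2, hα⟩
    have := congrFun heq α.1
    rwa [Set.indicator_of_mem hmem, Set.indicator_of_mem hmem, ← sub_eq_zero] at this
  have hzero := eq_zero_of_mem_V0_of_WLin_eq_zero hm3 hm4 hq hV0
    (by rw [map_sub, WLin_etaP_eq_of_hammingDist_eq hdist, sub_self])
  funext α
  by_cases hα : α ∈ Pset m (Fintype.card A)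
  · exact sub_eq_zero.1 (congrFun hzero ⟨α, hα⟩)
  · rw [eta_eq_zero_of_notMem_Pset mu hα, eta_eq_zero_of_notMem_Pset lam hα]

end Distance

theorem mon_eq_closed_inter_iso_general {A : Type*} [Fintype A] [DecidableEq A]
    (hq : 2 ≤ Fintype.card A) {m n : ℕ} (hm : 5 ≤ m ∨ m = 3)
    (lam : Fin m → Fin n → A) :
    ∃ H : Subgroup (Equiv.Perm (Fin m)),
      ClosedUnder permPart (Pset m (Fintype.card A) \ P2set m) (H : Set (Equiv.Perm (Fin m))) ∧
      MonSet lam = (H : Set (Equiv.Perm (Fin m))) ∩ IsoSet lam := by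
  have hS := smul_mem_Pset_diff_P2set_iff (m := m) (Fintype.card A)
  refine ⟨MulAction.stabilizer _ ((Pset m (Fintype.card A) \ P2set m).indicator (eta lam)),
    closedUnder_stabilizer_indicator hS _, ?_⟩
  ext g
  rw [mem_MonSet_iff, Set.mem_inter_iff, SetLike.mem_coe, ← inv_mem_iff,
    MulAction.mem_stabilizer_iff, inv_smul_indicator hS, ← eta_comp_perm]
  exact ⟨fun ⟨hiso, h⟩ => ⟨by rw [h], hiso⟩, fun ⟨h, hiso⟩ =>
    ⟨hiso, eta_eq_of_hammingDist_eq_of_indicator_eq (by omega) (by omega) hq hiso h⟩⟩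

/-- For a code of cardinality `m` (`m ≥ 5` or `m = 3`) over an alphabet of
cardinality `q ≥ 2`, there is a subgroup `H ≤ S(M)` closed under the action on `P ∖ P₂`
with `Mon(C) = H ∩ Iso(C)`. -/
theorem mon_eq_closed_inter_iso {A : Type*} [Fintype A] [DecidableEq A]
    (hq : 2 ≤ Fintype.card A) {m n : ℕ} (hm : 5 ≤ m ∨ m = 3) (hn : 0 < n)
    (lam : Fin m → Fin n → A) (hlam : Function.Injective lam) :
    ∃ H : Subgroup (Equiv.Perm (Fin m)),
      ClosedUnder permPart (Pset m (Fintype.card A) \ P2set m) (H : Set (Equiv.Perm (Fin m))) ∧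
      MonSet lam = (H : Set (Equiv.Perm (Fin m))) ∩ IsoSet lam :=
  mon_eq_closed_inter_iso_general hq hm lam
end

section
/- Let A be a finite alphabet of cardinality q ≥ 2 and let m ≥ 5 with M = {1,...,m}. For every subgroup H_1 ≤ S(M) that is closed under the action on P∖P_2 and every subgroup H_2 ≤ S(M) that is closed under the action on P_2, there exist a positive integer n and a code C ⊆ A^n of cardinality m (with some encoding bijection λ : M → C) such that Mon(C) = H_1 ∩ Iso(C) and Iso(C) = H_2. -/
section AuxBasic
open Finset

variable {m : ℕ}

lemma permPart_permPart (g h : Equiv.Perm (Fin m)) (α : Ptn m) :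
    permPart g (permPart h α) = permPart (g * h) α := by
  simp [permPart, Finset.image_image, Function.comp_def]

lemma permPart_one (α : Ptn m) : permPart 1 α = α := by
  simp [permPart]

lemma permPair_permPair (g h : Equiv.Perm (Fin m)) (p : Finset (Fin m)) :
    permPair g (permPair h p) = permPair (g * h) p := by
  simp [permPair, Finset.image_image, Function.comp_def]

lemma permPair_one (p : Finset (Fin m)) : permPair 1 p = p := by simp [permPair]

lemma permPart_inv_cancel (g : Equiv.Perm (Fin m)) (α : Ptn m) :
    permPart g (permPart g⁻¹ α) = α := by
  rw [permPart_permPart, mul_inv_cancel, permPart_one]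

lemma permPart_inv_cancel' (g : Equiv.Perm (Fin m)) (α : Ptn m) :
    permPart g⁻¹ (permPart g α) = α := by
  rw [permPart_permPart, inv_mul_cancel, permPart_one]

lemma permPair_inv_cancel (g : Equiv.Perm (Fin m)) (p : Finset (Fin m)) :
    permPair g (permPair g⁻¹ p) = p := by
  rw [permPair_permPair, mul_inv_cancel, permPair_one]

lemma permPair_inv_cancel' (g : Equiv.Perm (Fin m)) (p : Finset (Fin m)) :
    permPair g⁻¹ (permPair g p) = p := by
  rw [permPair_permPair, inv_mul_cancel, permPair_one]

lemma mem_permPair {g : Equiv.Perm (Fin m)} {p : Finset (Fin m)} {j : Fin m} :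
    j ∈ permPair g p ↔ g⁻¹ j ∈ p := by
  simp only [permPair, Finset.mem_image]
  constructor
  · rintro ⟨a, ha, rfl⟩; simpa using ha
  · intro h; exact ⟨g⁻¹ j, h, by simp⟩

lemma permPair_compl (g : Equiv.Perm (Fin m)) (p : Finset (Fin m)) :
    permPair g pᶜ = (permPair g p)ᶜ := by
  ext j; simp [mem_permPair]

lemma permPair_card (g : Equiv.Perm (Fin m)) (p : Finset (Fin m)) :
    (permPair g p).card = p.card :=
  Finset.card_image_of_injective _ g.injective

lemma permPart_pairPtn (g : Equiv.Perm (Fin m)) (p : Finset (Fin m)) :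
    permPart g ({p, pᶜ} : Ptn m) = {permPair g p, (permPair g p)ᶜ} := by
  simp only [permPart, Finset.image_insert, Finset.image_singleton]
  rw [show pᶜ.image g = permPair g pᶜ from rfl, permPair_compl]
  rfl

lemma compl_card (p : Finset (Fin m)) : (pᶜ).card = m - p.card := by
  rw [Finset.card_compl]; simp

lemma pair_unique (hm : 5 ≤ m) {p r : Finset (Fin m)} (hp : p.card = 2) (hr : r.card = 2)
    (h : ({p, pᶜ} : Ptn m) = {r, rᶜ}) : p = r := by
  have hmem : p ∈ ({r, rᶜ} : Ptn m) := by rw [← h]; simp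
  rcases Finset.mem_insert.1 hmem with h' | h'
  · exact h'
  · exfalso
    have := Finset.mem_singleton.1 h'
    have hc : (rᶜ).card = m - 2 := by rw [compl_card, hr]
    rw [this, hc] at hp; omega

lemma e2_mem_Pset (hm : 5 ≤ m) {q : ℕ} (hq : 2 ≤ q) (p : Finset (Fin m)) (hp : p.card = 2) :
    ({p, pᶜ} : Ptn m) ∈ Pset m q := by
  have hpc : (pᶜ).card = m - 2 := by rw [compl_card, hp]
  refine ⟨⟨?_, ?_⟩, ?_⟩
  · intro c hc
    rcases Finset.mem_insert.1 hc with rfl | hc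
    · exact Finset.card_pos.1 (by omega)
    · rw [Finset.mem_singleton.1 hc]
      exact Finset.card_pos.1 (by omega)
  · intro i
    by_cases hi : i ∈ p
    · refine ⟨p, ⟨by simp, hi⟩, ?_⟩
      rintro c ⟨hc, hic⟩
      rcases Finset.mem_insert.1 hc with rfl | hc
      · rfl
      · rw [Finset.mem_singleton.1 hc] at hic ⊢
        exact absurd hi (Finset.mem_compl.1 hic)
    · refine ⟨pᶜ, ⟨by simp, Finset.mem_compl.2 hi⟩, ?_⟩
      rintro c ⟨hc, hic⟩
      rcases Finset.mem_insert.1 hc with rfl | hc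
      · exact absurd hic hi
      · exact Finset.mem_singleton.1 hc
  · exact le_trans (Finset.card_insert_le _ _) (by simp [hq])

lemma e2_mem_P2set (p : Finset (Fin m)) (hp : p.card = 2) :
    ({p, pᶜ} : Ptn m) ∈ P2set m := ⟨p, hp, rfl⟩

lemma permPart_mem_P2set {g : Equiv.Perm (Fin m)} {α : Ptn m} (h : α ∈ P2set m) :
    permPart g α ∈ P2set m := by
  obtain ⟨p, hp, rfl⟩ := h
  rw [permPart_pairPtn]
  exact ⟨permPair g p, by rw [permPair_card]; exact hp, rfl⟩

lemma permPart_mem_P2set_iff {g : Equiv.Perm (Fin m)} {α : Ptn m} :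
    permPart g α ∈ P2set m ↔ α ∈ P2set m := by
  constructor
  · intro h
    have := permPart_mem_P2set (g := g⁻¹) h
    rwa [permPart_inv_cancel'] at this
  · exact permPart_mem_P2set

lemma permPart_mem_Pset_iff {q : ℕ} {g : Equiv.Perm (Fin m)} {α : Ptn m} :
    permPart g α ∈ Pset m q ↔ α ∈ Pset m q := by
  constructor
  · intro h
    have := permPart_mem_Pset g⁻¹ h
    rwa [permPart_inv_cancel'] at this
  · exact permPart_mem_Pset g

end AuxBasic
section OrbitCode
open Finset

variable {m : ℕ} {X : Type*} [Fintype X]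

/-- The orbit of `x` under `H` acting via `act` (with `x` inserted for nonemptiness). -/
noncomputable def orbF (H : Set (Equiv.Perm (Fin m))) (act : Equiv.Perm (Fin m) → X → X)
    (x : X) : Finset X :=
  (Set.toFinite {z | z = x ∨ ∃ h ∈ H, act h x = z}).toFinset

lemma mem_orbF {H : Set (Equiv.Perm (Fin m))} {act : Equiv.Perm (Fin m) → X → X} {x z : X} :
    z ∈ orbF H act x ↔ z = x ∨ ∃ h ∈ H, act h x = z := by
  simp [orbF]

lemma orbF_nonempty {H : Set (Equiv.Perm (Fin m))} {act : Equiv.Perm (Fin m) → X → X} {x : X} :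
    (orbF H act x).Nonempty := ⟨x, mem_orbF.2 (Or.inl rfl)⟩

/-- A numerical code for the orbit of `x`. -/
noncomputable def ocode (H : Set (Equiv.Perm (Fin m))) (act : Equiv.Perm (Fin m) → X → X)
    (x : X) : ℕ :=
  ((orbF H act x).image fun z => ((Fintype.equivFin X) z : ℕ)).min'
    (orbF_nonempty.image _)

variable {H : Subgroup (Equiv.Perm (Fin m))} {act : Equiv.Perm (Fin m) → X → X}
  (hmul : ∀ g h x, act g (act h x) = act (g * h) x) (hone : ∀ x, act 1 x = x)

include hmul hone in
lemma orbF_eq_of_mem {g : Equiv.Perm (Fin m)} (hg : g ∈ H) (x : X) :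
    orbF (H : Set (Equiv.Perm (Fin m))) act (act g x)
      = orbF (H : Set (Equiv.Perm (Fin m))) act x := by
  ext z
  rw [mem_orbF, mem_orbF]
  constructor
  · rintro (rfl | ⟨h, hh, rfl⟩)
    · exact Or.inr ⟨g, hg, rfl⟩
    · exact Or.inr ⟨h * g, H.mul_mem hh hg, by rw [← hmul]⟩
  · rintro (rfl | ⟨h, hh, rfl⟩)
    · exact Or.inr ⟨g⁻¹, H.inv_mem hg, by rw [hmul, inv_mul_cancel, hone]⟩
    · exact Or.inr ⟨h * g⁻¹, H.mul_mem hh (H.inv_mem hg), by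
        rw [hmul, mul_assoc, inv_mul_cancel, mul_one]⟩

include hmul hone in
lemma ocode_act {g : Equiv.Perm (Fin m)} (hg : g ∈ H) (x : X) :
    ocode (H : Set (Equiv.Perm (Fin m))) act (act g x)
      = ocode (H : Set (Equiv.Perm (Fin m))) act x := by
  unfold ocode
  congr 1
  rw [orbF_eq_of_mem hmul hone hg]

include hmul hone in
lemma ocode_eq {x y : X}
    (h : ocode (H : Set (Equiv.Perm (Fin m))) act x
        = ocode (H : Set (Equiv.Perm (Fin m))) act y) :
    ∃ g ∈ H, act g x = y := by
  have key : ∀ w : X, ∃ z ∈ orbF (H : Set (Equiv.Perm (Fin m))) act w,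
      ((Fintype.equivFin X) z : ℕ) = ocode (H : Set (Equiv.Perm (Fin m))) act w := by
    intro w
    have := Finset.min'_mem
      ((orbF (H : Set (Equiv.Perm (Fin m))) act w).image fun z => ((Fintype.equivFin X) z : ℕ))
      (orbF_nonempty.image _)
    rw [Finset.mem_image] at this
    obtain ⟨z, hz, he⟩ := this
    exact ⟨z, hz, he⟩
  obtain ⟨z₁, hz₁, he₁⟩ := key x
  obtain ⟨z₂, hz₂, he₂⟩ := key y
  have hz : z₁ = z₂ := by
    have : ((Fintype.equivFin X) z₁ : ℕ) = ((Fintype.equivFin X) z₂ : ℕ) := by rw [he₁, he₂, h]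
    exact (Fintype.equivFin X).injective (Fin.val_injective this)
  subst hz
  have hx : ∃ h₁ ∈ H, act h₁ x = z₁ := by
    rcases mem_orbF.1 hz₁ with rfl | h'
    · exact ⟨1, H.one_mem, hone _⟩
    · exact h'
  have hy : ∃ h₂ ∈ H, act h₂ y = z₁ := by
    rcases mem_orbF.1 hz₂ with rfl | h'
    · exact ⟨1, H.one_mem, hone _⟩
    · exact h'
  obtain ⟨h₁, hh₁, e₁⟩ := hx
  obtain ⟨h₂, hh₂, e₂⟩ := hy
  refine ⟨h₂⁻¹ * h₁, H.mul_mem (H.inv_mem hh₂) hh₁, ?_⟩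
  rw [← hmul, e₁, ← e₂, hmul, inv_mul_cancel, hone]

lemma permPart_hmul : ∀ (g h : Equiv.Perm (Fin m)) (x : Ptn m),
    permPart g (permPart h x) = permPart (g * h) x := permPart_permPart

lemma permPart_hone : ∀ x : Ptn m, permPart 1 x = x := permPart_one

lemma permPair_hmul : ∀ (g h : Equiv.Perm (Fin m)) (x : Finset (Fin m)),
    permPair g (permPair h x) = permPair (g * h) x := permPair_permPair

lemma permPair_hone : ∀ x : Finset (Fin m), permPair 1 x = x := permPair_one

end OrbitCode
section Counting
open Finset

variable {m : ℕ}

/-- indicator that `t ∩ r` is a singleton -/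
noncomputable def ind1 (t r : Finset (Fin m)) : ℚ := if (t ∩ r).card = 1 then 1 else 0

lemma Bmat_eq_ind1 (t r : OO m) : Bmat m t r = ind1 t.1 r.1 := rfl

/-- doubling: sums over unordered pairs vs ordered pairs -/
lemma sum_offDiag_pairs (f : Finset (Fin m) → ℚ) :
    ∑ p ∈ (Finset.univ : Finset (Fin m)).offDiag, f {p.1, p.2}
      = 2 * ∑ r ∈ Finset.powersetCard 2 (Finset.univ : Finset (Fin m)), f r := by
  classical
  have hmaps : ∀ p ∈ (Finset.univ : Finset (Fin m)).offDiag,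
      ({p.1, p.2} : Finset (Fin m)) ∈ Finset.powersetCard 2 Finset.univ := by
    intro p hp
    rw [Finset.mem_powersetCard_univ]
    exact Finset.card_pair (Finset.mem_offDiag.1 hp).2.2
  rw [← Finset.sum_fiberwise_of_maps_to hmaps (fun p => f {p.1, p.2})]
  rw [Finset.mul_sum]
  refine Finset.sum_congr rfl ?_
  intro y hy
  obtain ⟨a, b, hab, rfl⟩ := Finset.card_eq_two.1 (Finset.mem_powersetCard_univ.1 hy)
  have hfib : (Finset.univ : Finset (Fin m)).offDiag.filter
      (fun p => ({p.1, p.2} : Finset (Fin m)) = {a, b}) = {(a, b), (b, a)} := by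
    ext ⟨u, v⟩
    simp only [Finset.mem_filter, Finset.mem_offDiag, Finset.mem_univ, true_and,
      Finset.mem_insert, Finset.mem_singleton, Prod.mk.injEq]
    constructor
    · rintro ⟨huv, heq⟩
      have hu : u ∈ ({a, b} : Finset (Fin m)) := by
        rw [← heq]; exact Finset.mem_insert_self _ _
      have hv : v ∈ ({a, b} : Finset (Fin m)) := by
        rw [← heq]; exact Finset.mem_insert_of_mem (Finset.mem_singleton_self _)
      rcases Finset.mem_insert.1 hu with rfl | hu' <;>
        rcases Finset.mem_insert.1 hv with rfl | hv'
      · exact absurd rfl huv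
      · exact Or.inl ⟨rfl, Finset.mem_singleton.1 hv'⟩
      · exact Or.inr ⟨Finset.mem_singleton.1 hu', rfl⟩
      · exact absurd (( Finset.mem_singleton.1 hu').trans (Finset.mem_singleton.1 hv').symm) huv
    · rintro (⟨rfl, rfl⟩ | ⟨rfl, rfl⟩)
      · exact ⟨hab, rfl⟩
      · exact ⟨hab.symm, Finset.pair_comm _ _⟩
  rw [hfib]
  have hne : ((a, b) : Fin m × Fin m) ≠ (b, a) := by
    intro h
    exact hab (congrArg Prod.fst h)
  rw [Finset.sum_pair hne]
  have h1 : ({a, b} : Finset (Fin m)) = {b, a} := Finset.pair_comm _ _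
  rw [← h1]
  ring

lemma ind1_pair {w : Finset (Fin m)} {u v : Fin m} (huv : u ≠ v) :
    ind1 w {u, v} = (if u ∈ w then (1:ℚ) else 0) * (1 - if v ∈ w then (1:ℚ) else 0)
      + (if v ∈ w then (1:ℚ) else 0) * (1 - if u ∈ w then (1:ℚ) else 0) := by
  have hcomm : w ∩ ({u, v} : Finset (Fin m)) = ({u, v} : Finset (Fin m)) ∩ w :=
    Finset.inter_comm _ _
  unfold ind1
  rw [hcomm]
  by_cases hu : u ∈ w <;> by_cases hv : v ∈ w
  · have : ({u, v} : Finset (Fin m)) ∩ w = {u, v} :=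
      Finset.inter_eq_left.2 (Finset.insert_subset hu (Finset.singleton_subset_iff.2 hv))
    rw [this, Finset.card_pair huv]
    simp [hu, hv]
  · have : ({u, v} : Finset (Fin m)) ∩ w = {u} := by
      rw [Finset.insert_inter_of_mem hu, Finset.singleton_inter_of_notMem hv]
      simp
    rw [this, Finset.card_singleton]
    simp [hu, hv]
  · have : ({u, v} : Finset (Fin m)) ∩ w = {v} := by
      rw [Finset.insert_inter_of_notMem hu, Finset.singleton_inter_of_mem hv]
    rw [this, Finset.card_singleton]
    simp [hu, hv]
  · have : ({u, v} : Finset (Fin m)) ∩ w = ∅ := by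
      rw [Finset.insert_inter_of_notMem hu, Finset.singleton_inter_of_notMem hv]
    rw [this, Finset.card_empty]
    simp [hu, hv]

end Counting
section Qsum
open Finset

variable {m : ℕ}

/-- The central count: `∑_r [|t∩r|=1][|s∩r|=1]` over 2-element subsets `r`. -/
lemma Qsum_eq (t s : OO m) :
    ∑ r : OO m, ind1 t.1 r.1 * ind1 s.1 r.1
      = ((t.1 ∩ s.1).card : ℚ) * ((m : ℚ) - 4 + ((t.1 ∩ s.1).card : ℚ))
        + (2 - ((t.1 ∩ s.1).card : ℚ))^2 := by
  classical
  set k : ℚ := ((t.1 ∩ s.1).card : ℚ) with hk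
  set ta : Fin m → ℚ := fun u => if u ∈ t.1 then (1:ℚ) else 0 with hta
  set sa : Fin m → ℚ := fun u => if u ∈ s.1 then (1:ℚ) else 0 with hsa
  -- basic sums
  have hsum1 : ∑ _v : Fin m, (1:ℚ) = (m : ℚ) := by simp
  have hsumt : ∑ v : Fin m, ta v = 2 := by
    rw [hta]; rw [Finset.sum_boole]
    norm_num [Finset.filter_univ_mem, t.2]
  have hsums : ∑ v : Fin m, sa v = 2 := by
    rw [hsa]; rw [Finset.sum_boole]
    norm_num [Finset.filter_univ_mem, s.2]
  have hsumts : ∑ v : Fin m, ta v * sa v = k := by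
    have : ∀ v : Fin m, ta v * sa v = if v ∈ t.1 ∩ s.1 then (1:ℚ) else 0 := by
      intro v
      rw [hta, hsa]
      by_cases h1 : v ∈ t.1 <;> by_cases h2 : v ∈ s.1 <;>
        simp [h1, h2, Finset.mem_inter]
    rw [Finset.sum_congr rfl fun v _ => this v, Finset.sum_boole, hk]
    norm_num
    congr 1
    ext x
    simp [Finset.mem_inter]
  -- the canonical linear sum
  have hlin : ∀ c0 c1 c2 c3 : ℚ,
      ∑ v : Fin m, (c0 + c1 * ta v + c2 * sa v + c3 * (ta v * sa v))
        = c0 * m + c1 * 2 + c2 * 2 + c3 * k := by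
    intro c0 c1 c2 c3
    rw [Finset.sum_add_distrib, Finset.sum_add_distrib, Finset.sum_add_distrib,
      ← Finset.mul_sum, ← Finset.mul_sum, ← Finset.mul_sum, hsumt, hsums, hsumts]
    rw [Finset.sum_const]
    simp [mul_comm]
  -- χ : ordered-pair weight
  set χ : Fin m → Fin m → ℚ := fun u v =>
    (ta u * (1 - ta v) + ta v * (1 - ta u)) * (sa u * (1 - sa v) + sa v * (1 - sa u)) with hχ
  -- step 1: sum over OO = sum over powersetCard 2
  have step1 : ∑ r : OO m, ind1 t.1 r.1 * ind1 s.1 r.1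
      = ∑ r ∈ Finset.powersetCard 2 (Finset.univ : Finset (Fin m)),
          ind1 t.1 r * ind1 s.1 r := by
    rw [Finset.sum_subtype (Finset.powersetCard 2 Finset.univ)
      (fun x => Finset.mem_powersetCard_univ) (fun r => ind1 t.1 r * ind1 s.1 r)]
  -- step 2: doubling
  have step2 : ∑ p ∈ (Finset.univ : Finset (Fin m)).offDiag,
      (ind1 t.1 {p.1, p.2} * ind1 s.1 {p.1, p.2})
        = 2 * ∑ r ∈ Finset.powersetCard 2 (Finset.univ : Finset (Fin m)),
            ind1 t.1 r * ind1 s.1 r :=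
    sum_offDiag_pairs (fun r => ind1 t.1 r * ind1 s.1 r)
  -- step 3: pointwise rewrite on offDiag
  have step3 : ∑ p ∈ (Finset.univ : Finset (Fin m)).offDiag,
      (ind1 t.1 {p.1, p.2} * ind1 s.1 {p.1, p.2})
        = ∑ p ∈ (Finset.univ : Finset (Fin m)).offDiag, χ p.1 p.2 := by
    refine Finset.sum_congr rfl ?_
    intro p hp
    have hne := (Finset.mem_offDiag.1 hp).2.2
    rw [ind1_pair hne, ind1_pair hne, hχ]
  -- step 4: extend to full product, diagonal terms vanish
  have step4 : ∑ p ∈ (Finset.univ : Finset (Fin m)).offDiag, χ p.1 p.2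
      = ∑ p ∈ (Finset.univ : Finset (Fin m)) ×ˢ (Finset.univ : Finset (Fin m)), χ p.1 p.2 := by
    refine Finset.sum_subset ?_ ?_
    · intro p hp
      rcases Finset.mem_offDiag.1 hp with ⟨h1, h2, _⟩
      exact Finset.mem_product.2 ⟨h1, h2⟩
    · intro p hp hnp
      have : p.1 = p.2 := by
        by_contra hne
        exact hnp (Finset.mem_offDiag.2 ⟨Finset.mem_univ _, Finset.mem_univ _, hne⟩)
      rw [hχ]
      simp only
      rw [← this]
      rw [hta, hsa]
      by_cases h1 : p.1 ∈ t.1 <;> by_cases h2 : p.1 ∈ s.1 <;> simp [h1, h2]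
  -- step 5: evaluate the double sum
  have step5 : ∑ p ∈ (Finset.univ : Finset (Fin m)) ×ˢ (Finset.univ : Finset (Fin m)), χ p.1 p.2
      = 2 * (k * ((m : ℚ) - 4 + k) + (2 - k)^2) := by
    rw [Finset.sum_product]
    have inner : ∀ u : Fin m, ∑ v : Fin m, χ u v
        = (ta u * sa u) * m + (sa u - 2 * (ta u * sa u)) * 2
          + (ta u - 2 * (ta u * sa u)) * 2
          + (1 - 2 * ta u - 2 * sa u + 4 * (ta u * sa u)) * k := by
      intro u
      rw [← hlin (ta u * sa u) (sa u - 2 * (ta u * sa u)) (ta u - 2 * (ta u * sa u))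
        (1 - 2 * ta u - 2 * sa u + 4 * (ta u * sa u))]
      refine Finset.sum_congr rfl ?_
      intro v _
      rw [hχ]
      ring
    rw [Finset.sum_congr rfl fun u _ => inner u]
    have regroup : ∀ u : Fin m,
        (ta u * sa u) * m + (sa u - 2 * (ta u * sa u)) * 2
          + (ta u - 2 * (ta u * sa u)) * 2
          + (1 - 2 * ta u - 2 * sa u + 4 * (ta u * sa u)) * k
        = k + (2 - 2*k) * ta u + (2 - 2*k) * sa u + ((m : ℚ) - 8 + 4*k) * (ta u * sa u) := by
      intro u; ring
    rw [Finset.sum_congr rfl fun u _ => regroup u, hlin]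
    ring
  -- combine
  have : 2 * (∑ r : OO m, ind1 t.1 r.1 * ind1 s.1 r.1)
      = 2 * (k * ((m : ℚ) - 4 + k) + (2 - k)^2) := by
    rw [step1, ← step2, step3, step4, step5]
  have h2 : (2:ℚ) ≠ 0 := by norm_num
  exact mul_left_cancel₀ h2 this

end Qsum
section BD
open Finset

variable {m : ℕ}

lemma inter_card_cases (t s : OO m) (hne : t ≠ s) :
    (t.1 ∩ s.1).card = 0 ∨ (t.1 ∩ s.1).card = 1 := by
  have hle : (t.1 ∩ s.1).card ≤ 2 := by
    calc (t.1 ∩ s.1).card ≤ t.1.card := Finset.card_le_card Finset.inter_subset_left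
    _ = 2 := t.2
  have h2 : (t.1 ∩ s.1).card ≠ 2 := by
    intro h
    have h1 : t.1 ∩ s.1 = t.1 :=
      Finset.eq_of_subset_of_card_le Finset.inter_subset_left (by rw [h, t.2])
    have hsub : t.1 ⊆ s.1 := by rw [← h1]; exact Finset.inter_subset_right
    have : t.1 = s.1 := Finset.eq_of_subset_of_card_le hsub (by rw [s.2, t.2])
    exact hne (Subtype.ext this)
  omega

lemma Dmat_decomp (r s : OO m) :
    Dmat m r s = (-2 + ((m:ℚ) - 2) * ind1 s.1 r.1
        + (-(m:ℚ)^2 + 8*(m:ℚ) - 12) * (if r = s then (1:ℚ) else 0))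
      / (2 * ((m:ℚ) - 2) * ((m:ℚ) - 4)) := by
  by_cases he : r = s
  · subst he
    have hind : ind1 r.1 r.1 = 0 := by
      unfold ind1
      rw [Finset.inter_self, r.2]
      norm_num
    simp only [Dmat, Matrix.of_apply, hind, mul_zero, add_zero, if_true, eq_self_iff_true]
    congr 1
    ring
  · have hind : ind1 s.1 r.1 = if (r.1 ∩ s.1).card = 1 then (1:ℚ) else 0 := by
      unfold ind1
      rw [Finset.inter_comm]
    simp only [Dmat, Matrix.of_apply, if_neg he, hind]
    by_cases hc : (r.1 ∩ s.1).card = 1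
    · rw [if_pos hc, if_pos hc]
      congr 1
      ring
    · rw [if_neg hc, if_neg hc]
      congr 1
      ring

lemma Bmat_mul_Dmat (hm : 5 ≤ m) : Bmat m * Dmat m = 1 := by
  have hm5 : (5:ℚ) ≤ (m:ℚ) := by exact_mod_cast hm
  have hden : 2 * ((m:ℚ) - 2) * ((m:ℚ) - 4) ≠ 0 := by
    have h1 : (m:ℚ) - 2 > 0 := by linarith
    have h2 : (m:ℚ) - 4 > 0 := by linarith
    positivity
  ext t s
  rw [Matrix.mul_apply, Matrix.one_apply]
  have hrw : ∀ r : OO m, Bmat m t r * Dmat m r s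
      = (-2 * ind1 t.1 r.1 + ((m:ℚ) - 2) * (ind1 t.1 r.1 * ind1 s.1 r.1)
          + (-(m:ℚ)^2 + 8*(m:ℚ) - 12) * (if r = s then ind1 t.1 r.1 else 0))
        / (2 * ((m:ℚ) - 2) * ((m:ℚ) - 4)) := by
    intro r
    rw [Bmat_eq_ind1, Dmat_decomp]
    rw [mul_div_assoc', mul_comm]  -- hope: a * (b/c) = (a*b)/c
    congr 1
    by_cases he : r = s <;> simp [he] <;> ring
  rw [Finset.sum_congr rfl fun r _ => hrw r, ← Finset.sum_div]
  rw [Finset.sum_add_distrib, Finset.sum_add_distrib]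
  rw [← Finset.mul_sum, ← Finset.mul_sum, ← Finset.mul_sum]
  have hQtt : ∑ r : OO m, ind1 t.1 r.1 = 2 * ((m:ℚ) - 2) := by
    have hpt : ∀ r : OO m, ind1 t.1 r.1 = ind1 t.1 r.1 * ind1 t.1 r.1 := by
      intro r
      unfold ind1
      by_cases hc : (t.1 ∩ r.1).card = 1 <;> simp [hc]
    rw [Finset.sum_congr rfl fun r _ => hpt r, Qsum_eq t t]
    rw [Finset.inter_self, t.2]
    norm_num
    ring
  have hIte : ∑ r : OO m, (if r = s then ind1 t.1 r.1 else 0) = ind1 t.1 s.1 := by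
    rw [Finset.sum_ite_eq' Finset.univ s (fun r => ind1 t.1 r.1)]
    simp
  rw [hQtt, hIte, Qsum_eq t s]
  by_cases he : t = s
  · subst he
    have h0 : ind1 t.1 t.1 = 0 := by
      unfold ind1
      rw [Finset.inter_self, t.2]
      norm_num
    rw [if_pos rfl, h0, Finset.inter_self, t.2]
    rw [div_eq_one_iff_eq hden]
    norm_num
    ring
  · rw [if_neg he]
    rcases inter_card_cases t s he with hc | hc
    · have h0 : ind1 t.1 s.1 = 0 := by unfold ind1; rw [hc]; norm_num
      rw [hc, h0]
      norm_num
      left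
      ring
    · have h1 : ind1 t.1 s.1 = 1 := by unfold ind1; rw [hc]; norm_num
      rw [hc, h1]
      rw [div_eq_iff hden]
      norm_num
      ring

end BD
section Columns
open Finset

variable {m : ℕ} {A : Type*} [Fintype A] [DecidableEq A]

open Classical in
/-- the class of `i` in the partition `α` -/
noncomputable def classOf (α : Ptn m) (hα : IsPartition α) (i : Fin m) : Finset (Fin m) :=
  Finset.choose (fun c => i ∈ c) α (hα.2 i)

lemma classOf_mem (α : Ptn m) (hα : IsPartition α) (i : Fin m) :
    classOf α hα i ∈ α := by
  classical
  exact Finset.choose_mem _ _ _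

lemma mem_classOf (α : Ptn m) (hα : IsPartition α) (i : Fin m) :
    i ∈ classOf α hα i := by
  classical
  exact Finset.choose_property (fun c => i ∈ c) α (hα.2 i)

lemma classOf_eq_of_mem {α : Ptn m} (hα : IsPartition α) {i : Fin m} {c : Finset (Fin m)}
    (hc : c ∈ α) (hic : i ∈ c) : classOf α hα i = c :=
  (hα.2 i).unique ⟨classOf_mem α hα i, mem_classOf α hα i⟩ ⟨hc, hic⟩

/-- a canonical column realizing the partition `α` -/
noncomputable def xcol (α : Ptn m) (hα : IsPartition α) (hcard : α.card ≤ Fintype.card A) :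
    Fin m → A := fun i =>
  (Classical.choice (Function.Embedding.nonempty_of_card_le
    (by rw [Fintype.card_coe]; exact hcard) : Nonempty ({c // c ∈ α} ↪ A)))
    ⟨classOf α hα i, classOf_mem α hα i⟩

lemma xcol_eq_iff (α : Ptn m) (hα : IsPartition α) (hcard : α.card ≤ Fintype.card A)
    (i j : Fin m) :
    xcol (A := A) α hα hcard i = xcol (A := A) α hα hcard j ↔ ∃ c ∈ α, i ∈ c ∧ j ∈ c := by
  unfold xcol
  rw [(Classical.choice _ : ({c // c ∈ α} ↪ A)).injective.eq_iff, Subtype.mk.injEq]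
  constructor
  · intro h
    exact ⟨classOf α hα j, classOf_mem α hα j, h ▸ mem_classOf α hα i, mem_classOf α hα j⟩
  · rintro ⟨c, hc, hic, hjc⟩
    rw [classOf_eq_of_mem hα hc hic, classOf_eq_of_mem hα hc hjc]

/-- the partition induced by a map `x : Fin m → A` -/
def partFun (x : Fin m → A) : Ptn m :=
  Finset.univ.image fun i => Finset.univ.filter fun j => x j = x i

lemma partFun_xcol (α : Ptn m) (hα : IsPartition α) (hcard : α.card ≤ Fintype.card A) :
    partFun (xcol (A := A) α hα hcard) = α := by
  unfold partFun
  ext c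
  simp only [Finset.mem_image, Finset.mem_univ, true_and]
  constructor
  · rintro ⟨i, rfl⟩
    have : (Finset.univ.filter fun j => xcol (A := A) α hα hcard j = xcol (A := A) α hα hcard i)
        = classOf α hα i := by
      ext j
      simp only [Finset.mem_filter, Finset.mem_univ, true_and]
      rw [xcol_eq_iff]
      constructor
      · rintro ⟨c, hc, hjc, hic⟩
        rw [classOf_eq_of_mem hα hc hic]
        exact hjc
      · intro hj
        exact ⟨classOf α hα i, classOf_mem α hα i, hj, mem_classOf α hα i⟩
    rw [this]
    exact classOf_mem α hα i
  · intro hc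
    obtain ⟨i, hi⟩ := hα.1 c hc
    refine ⟨i, ?_⟩
    ext j
    simp only [Finset.mem_filter, Finset.mem_univ, true_and]
    rw [xcol_eq_iff]
    constructor
    · rintro ⟨c', hc', hjc', hic'⟩
      rwa [← classOf_eq_of_mem hα hc hi, classOf_eq_of_mem hα hc' hic']
    · intro hj
      exact ⟨c, hc, hj, hi⟩

lemma partFun_comp_perm (x : Fin m → A) (g : Equiv.Perm (Fin m)) :
    partFun (x ∘ g) = permPart g⁻¹ (partFun x) := by
  have key : ∀ i : Fin m,
      (Finset.univ.filter fun j => x (g j) = x (g i))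
        = (Finset.univ.filter fun j => x j = x (g i)).image ⇑g⁻¹ := by
    intro i
    ext j
    simp only [Finset.mem_filter, Finset.mem_univ, true_and, Finset.mem_image]
    constructor
    · intro h
      exact ⟨g j, by simpa using h, by simp⟩
    · rintro ⟨a, ha, rfl⟩
      simpa using ha
  unfold partFun permPart
  ext c
  simp only [Finset.mem_image, Finset.mem_univ, true_and, exists_exists_eq_and]
  constructor
  · rintro ⟨i, rfl⟩
    refine ⟨g i, ?_⟩
    rw [← key i]
    rfl
  · rintro ⟨i, rfl⟩
    refine ⟨g⁻¹ i, ?_⟩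
    have h2 := key (g⁻¹ i)
    rw [show g (g⁻¹ i) = i by simp] at h2
    rw [← h2]
    simp [Function.comp]

lemma partFun_perm_comp (σ : Equiv.Perm A) (x : Fin m → A) :
    partFun (⇑σ ∘ x) = partFun x := by
  unfold partFun
  refine Finset.image_congr ?_
  intro i _
  ext j
  simp

end Columns
section SigmaExist
open Finset

variable {m : ℕ} {A : Type*} [Fintype A] [DecidableEq A]

lemma exists_perm_of_ker_eq {x y : Fin m → A} (h : ∀ i j, x i = x j ↔ y i = y j) :
    ∃ σ : Equiv.Perm A, ∀ i, x i = σ (y i) := by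
  classical
  set s : Finset A := Finset.univ.image y with hs
  set t : Finset A := Finset.univ.image x with ht
  have hpick : ∀ a : {a // a ∈ s}, ∃ i : Fin m, y i = a.1 := by
    rintro ⟨a, ha⟩
    obtain ⟨i, _, hi⟩ := Finset.mem_image.1 ha
    exact ⟨i, hi⟩
  choose pick hpick_spec using hpick
  have f0mem : ∀ a : {a // a ∈ s}, x (pick a) ∈ t := fun a =>
    Finset.mem_image.2 ⟨pick a, Finset.mem_univ _, rfl⟩
  set f0 : {a // a ∈ s} → {b // b ∈ t} := fun a => ⟨x (pick a), f0mem a⟩ with hf0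
  have hinj : Function.Injective f0 := by
    rintro a a' he
    have hx : x (pick a) = x (pick a') := congrArg Subtype.val he
    have hy : y (pick a) = y (pick a') := (h _ _).1 hx
    apply Subtype.ext
    rw [← hpick_spec a, ← hpick_spec a', hy]
  have hsurj : Function.Surjective f0 := by
    rintro ⟨b, hb⟩
    obtain ⟨i, _, rfl⟩ := Finset.mem_image.1 hb
    have hyi : y i ∈ s := Finset.mem_image.2 ⟨i, Finset.mem_univ _, rfl⟩
    refine ⟨⟨y i, hyi⟩, ?_⟩
    apply Subtype.ext
    show x (pick ⟨y i, hyi⟩) = x i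
    apply (h _ _).2
    rw [hpick_spec ⟨y i, hyi⟩]
  set e : {a // a ∈ s} ≃ {b // b ∈ t} := Equiv.ofBijective f0 ⟨hinj, hsurj⟩ with hee
  have hcards : Fintype.card {a // ¬ a ∈ s} = Fintype.card {b // ¬ b ∈ t} := by
    rw [Fintype.card_subtype_compl, Fintype.card_subtype_compl]
    congr 1
    exact Fintype.card_congr e
  set e' : {a // ¬ a ∈ s} ≃ {b // ¬ b ∈ t} := Fintype.equivOfCardEq hcards with he'
  refine ⟨Equiv.subtypeCongr e e', ?_⟩
  intro i
  have hyi : y i ∈ s := Finset.mem_image.2 ⟨i, Finset.mem_univ _, rfl⟩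
  have : Equiv.subtypeCongr e e' (y i) = (e ⟨y i, hyi⟩ : A) := by
    unfold Equiv.subtypeCongr
    simp [hyi]
  rw [this]
  show x i = (f0 ⟨y i, hyi⟩ : A)
  show x i = x (pick ⟨y i, hyi⟩)
  apply (h _ _).2
  rw [hpick_spec ⟨y i, hyi⟩]

end SigmaExist
section MainDefs
open Finset

variable {m : ℕ}

lemma sum_ind1 (t : OO m) : ∑ r : OO m, ind1 t.1 r.1 = 2 * ((m:ℚ) - 2) := by
  have hpt : ∀ r : OO m, ind1 t.1 r.1 = ind1 t.1 r.1 * ind1 t.1 r.1 := by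
    intro r
    unfold ind1
    by_cases hc : (t.1 ∩ r.1).card = 1 <;> simp [hc]
  rw [Finset.sum_congr rfl fun r _ => hpt r, Qsum_eq t t]
  rw [Finset.inter_self, t.2]
  norm_num
  ring

/-- orbit code for `H₁` acting on partitions -/
noncomputable def cfun (H₁ : Subgroup (Equiv.Perm (Fin m))) : Ptn m → ℕ :=
  ocode (H₁ : Set (Equiv.Perm (Fin m))) permPart

/-- orbit code for `H₂` acting on subsets -/
noncomputable def yfun (H₂ : Subgroup (Equiv.Perm (Fin m))) : Finset (Fin m) → ℕ :=
  ocode (H₂ : Set (Equiv.Perm (Fin m))) permPair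

open Classical in
noncomputable def cQf (H₁ : Subgroup (Equiv.Perm (Fin m))) (q : ℕ) : PP m q → ℕ := fun α =>
  if (α : Ptn m) ∈ P2set m then 0 else cfun H₁ α.1

open Classical in
noncomputable def DeltaZ (q : ℕ) : PP m q → OO m → ℤ := fun α t =>
  if ∃ c ∈ (α : Ptn m), t.1 ⊆ c then 0 else 1

noncomputable def SZf (H₁ : Subgroup (Equiv.Perm (Fin m))) (q : ℕ) : OO m → ℤ := fun t =>
  ∑ α : PP m q, (cQf H₁ q α : ℤ) * DeltaZ q α t

noncomputable def DZ (m : ℕ) : OO m → OO m → ℤ := fun p t =>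
  if p = t then -(m:ℤ)^2 + 8*m - 14 else if (p.1 ∩ t.1).card = 1 then (m:ℤ) - 4 else -2

noncomputable def d0Zf (H₁ H₂ : Subgroup (Equiv.Perm (Fin m))) (q : ℕ) : OO m → ℤ := fun p =>
  ∑ r : OO m, DZ m p r * ((yfun H₂ r.1 : ℤ) - SZf H₁ q r)

noncomputable def Rbigf (H₁ H₂ : Subgroup (Equiv.Perm (Fin m))) (q : ℕ) : ℕ :=
  1 + ∑ p : OO m, (d0Zf H₁ H₂ q p).natAbs

noncomputable def dNf (H₁ H₂ : Subgroup (Equiv.Perm (Fin m))) (q : ℕ) : OO m → ℕ := fun p =>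
  (d0Zf H₁ H₂ q p + (Rbigf H₁ H₂ q : ℤ)).toNat

def Tm (m : ℕ) : ℕ := 2*(m-2)*(m-4)

open Classical in
noncomputable def etaNf (H₁ H₂ : Subgroup (Equiv.Perm (Fin m))) (q : ℕ) : PP m q → ℕ := fun α =>
  if h : ∃ p : OO m, (α : Ptn m) = {p.1, p.1ᶜ} then dNf H₁ H₂ q h.choose
  else Tm m * cfun H₁ α.1

variable {H₁ H₂ : Subgroup (Equiv.Perm (Fin m))} {q : ℕ}

lemma dNf_cast (p : OO m) :
    ((dNf H₁ H₂ q p : ℤ)) = d0Zf H₁ H₂ q p + (Rbigf H₁ H₂ q : ℤ) := by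
  apply Int.toNat_of_nonneg
  have h1 : (d0Zf H₁ H₂ q p).natAbs ≤ ∑ r : OO m, (d0Zf H₁ H₂ q r).natAbs :=
    Finset.single_le_sum (f := fun r : OO m => (d0Zf H₁ H₂ q r).natAbs)
      (fun r _ => Nat.zero_le _) (Finset.mem_univ p)
  have h3 : |d0Zf H₁ H₂ q p| ≤ ∑ r : OO m, |d0Zf H₁ H₂ q r| := by
    have := Int.ofNat_le.2 h1
    push_cast at this
    exact this
  unfold Rbigf
  push_cast
  linarith [neg_abs_le (d0Zf H₁ H₂ q p)]

lemma dNf_pos (p : OO m) : 1 ≤ dNf H₁ H₂ q p := by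
  have h := dNf_cast (H₁ := H₁) (H₂ := H₂) (q := q) p
  have h1 : (d0Zf H₁ H₂ q p).natAbs ≤ ∑ r : OO m, (d0Zf H₁ H₂ q r).natAbs :=
    Finset.single_le_sum (f := fun r : OO m => (d0Zf H₁ H₂ q r).natAbs)
      (fun r _ => Nat.zero_le _) (Finset.mem_univ p)
  have h3 : |d0Zf H₁ H₂ q p| ≤ ∑ r : OO m, |d0Zf H₁ H₂ q r| := by
    have := Int.ofNat_le.2 h1
    push_cast at this
    exact this
  have : (1 : ℤ) ≤ (dNf H₁ H₂ q p : ℤ) := by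
    rw [h]
    unfold Rbigf
    push_cast
    linarith [neg_abs_le (d0Zf H₁ H₂ q p)]
  exact_mod_cast this

lemma P2_iff {α : PP m q} :
    (α : Ptn m) ∈ P2set m ↔ ∃ p : OO m, (α : Ptn m) = {p.1, p.1ᶜ} := by
  constructor
  · rintro ⟨p, hp, heq⟩
    exact ⟨⟨p, hp⟩, heq⟩
  · rintro ⟨p, heq⟩
    exact ⟨p.1, p.2, heq⟩

lemma etaNf_P2 (hm : 5 ≤ m) {α : PP m q} {p : OO m} (hp : (α : Ptn m) = {p.1, p.1ᶜ}) :
    etaNf H₁ H₂ q α = dNf H₁ H₂ q p := by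
  unfold etaNf
  have hex : ∃ p' : OO m, (α : Ptn m) = {p'.1, p'.1ᶜ} := ⟨p, hp⟩
  rw [dif_pos hex]
  congr 1
  apply Subtype.ext
  exact pair_unique hm hex.choose.2 p.2 (hex.choose_spec.symm.trans hp)

lemma etaNf_nonP2 {α : PP m q} (h : (α : Ptn m) ∉ P2set m) :
    etaNf H₁ H₂ q α = Tm m * cfun H₁ α.1 := by
  unfold etaNf
  rw [dif_neg]
  intro hc
  exact h (P2_iff.2 hc)

lemma Tm_cast (hm : 5 ≤ m) : ((Tm m : ℕ) : ℚ) = 2 * ((m:ℚ) - 2) * ((m:ℚ) - 4) := by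
  unfold Tm
  have h2 : 2 ≤ m := by omega
  have h4 : 4 ≤ m := by omega
  push_cast [h2, h4]
  ring

lemma Tm_pos (hm : 5 ≤ m) : 0 < Tm m := by
  unfold Tm
  have h1 : 0 < m - 2 := by omega
  have h2 : 0 < m - 4 := by omega
  exact Nat.mul_pos (Nat.mul_pos (by norm_num) h1) h2

lemma DZ_cast (hm : 5 ≤ m) (p r : OO m) :
    ((DZ m p r : ℤ) : ℚ) = (Tm m : ℚ) * Dmat m p r := by
  have hden : 2 * ((m:ℚ) - 2) * ((m:ℚ) - 4) ≠ 0 := by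
    have hm5 : (5:ℚ) ≤ (m:ℚ) := by exact_mod_cast hm
    have h1 : (m:ℚ) - 2 > 0 := by linarith
    have h2 : (m:ℚ) - 4 > 0 := by linarith
    positivity
  rw [Tm_cast hm]
  unfold DZ Dmat
  by_cases he : p = r
  · rw [if_pos he]
    simp only [Matrix.of_apply, if_pos he]
    rw [mul_div_cancel₀ _ hden]
    push_cast
    ring
  · rw [if_neg he]
    simp only [Matrix.of_apply, if_neg he]
    by_cases hc : (p.1 ∩ r.1).card = 1
    · rw [if_pos hc, if_pos hc, mul_div_cancel₀ _ hden]
      push_cast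
      ring
    · rw [if_neg hc, if_neg hc, mul_div_cancel₀ _ hden]
      push_cast
      ring

lemma DeltaZ_cast (α : PP m q) (t : OO m) :
    ((DeltaZ q α t : ℤ) : ℚ) = Delta α t := by
  unfold DeltaZ Delta
  by_cases h : ∃ c ∈ (α : Ptn m), t.1 ⊆ c
  · rw [if_pos h, if_pos h]; norm_num
  · rw [if_neg h, if_neg h]; norm_num

lemma SZf_cast (t : OO m) :
    ((SZf H₁ q t : ℤ) : ℚ) = ∑ α : PP m q, (cQf H₁ q α : ℚ) * Delta α t := by
  unfold SZf
  push_cast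
  refine Finset.sum_congr rfl ?_
  intro α _
  rw [← DeltaZ_cast α t]

end MainDefs
section Equivariance
open Finset

variable {m : ℕ}

lemma pair_inter_card_le (t p : OO m) : (t.1 ∩ p.1).card ≤ 2 := by
  calc (t.1 ∩ p.1).card ≤ t.1.card := Finset.card_le_card Finset.inter_subset_left
  _ = 2 := t.2

lemma Delta_pair_iff (t p : OO m) :
    (∃ c ∈ ({p.1, p.1ᶜ} : Ptn m), t.1 ⊆ c) ↔ ¬ ((t.1 ∩ p.1).card = 1) := by
  constructor
  · rintro ⟨c, hc, hsub⟩
    rcases Finset.mem_insert.1 hc with h | hc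
    · rw [h] at hsub
      have : t.1 ∩ p.1 = t.1 := Finset.inter_eq_left.2 hsub
      rw [this, t.2]
      norm_num
    · rw [Finset.mem_singleton.1 hc] at hsub
      have : t.1 ∩ p.1 = ∅ := by
        ext j
        simp only [Finset.mem_inter, Finset.notMem_empty, iff_false, not_and]
        intro hj
        exact fun hjp => (Finset.mem_compl.1 (hsub hj)) hjp
      rw [this]
      norm_num
  · intro hne
    have hle := pair_inter_card_le t p
    have : (t.1 ∩ p.1).card = 0 ∨ (t.1 ∩ p.1).card = 2 := by omega
    rcases this with h0 | h2
    · refine ⟨p.1ᶜ, by simp, ?_⟩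
      intro j hj
      rw [Finset.mem_compl]
      intro hjp
      have : j ∈ t.1 ∩ p.1 := Finset.mem_inter.2 ⟨hj, hjp⟩
      rw [Finset.card_eq_zero.1 h0] at this
      exact absurd this (Finset.notMem_empty j)
    · refine ⟨p.1, Finset.mem_insert_self _ _, ?_⟩
      have heq : t.1 ∩ p.1 = t.1 :=
        Finset.eq_of_subset_of_card_le Finset.inter_subset_left (by rw [h2, t.2])
      rw [← heq]
      exact Finset.inter_subset_right

/-- `Delta` of a pair partition is the `B`-matrix entry. -/
lemma Delta_pairPtn {q : ℕ} (hm : 5 ≤ m) (hq : 2 ≤ q) (t p : OO m)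
    (α : PP m q) (hα : (α : Ptn m) = {p.1, p.1ᶜ}) :
    Delta α t = Bmat m t p := by
  unfold Delta Bmat
  simp only [Matrix.of_apply]
  rw [hα]
  by_cases hc : (t.1 ∩ p.1).card = 1
  · rw [if_neg (fun h => (Delta_pair_iff t p).1 h hc), if_pos hc]
  · rw [if_pos ((Delta_pair_iff t p).2 hc), if_neg hc]

/-- action of a permutation on `OO m` as an equivalence -/
def pairPermEquiv (g : Equiv.Perm (Fin m)) : OO m ≃ OO m where
  toFun p := ⟨permPair g p.1, by rw [permPair_card]; exact p.2⟩
  invFun p := ⟨permPair g⁻¹ p.1, by rw [permPair_card]; exact p.2⟩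
  left_inv p := Subtype.ext (permPair_inv_cancel' g p.1)
  right_inv p := Subtype.ext (permPair_inv_cancel g p.1)

/-- action of a permutation on `PP m q` as an equivalence -/
def ppEquiv {q : ℕ} (g : Equiv.Perm (Fin m)) : PP m q ≃ PP m q where
  toFun := permPP g
  invFun := permPP g⁻¹
  left_inv α := Subtype.ext (permPart_inv_cancel' g α.1)
  right_inv α := Subtype.ext (permPart_inv_cancel g α.1)

lemma DZ_equivariant (g : Equiv.Perm (Fin m)) (p r : OO m) :
    DZ m (pairPermEquiv g p) (pairPermEquiv g r) = DZ m p r := by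
  unfold DZ
  have h1 : (pairPermEquiv g p = pairPermEquiv g r) ↔ p = r := (pairPermEquiv g).apply_eq_iff_eq
  have h2 : ((pairPermEquiv g p).1 ∩ (pairPermEquiv g r).1).card = (p.1 ∩ r.1).card := by
    show (permPair g p.1 ∩ permPair g r.1).card = _
    unfold permPair
    rw [← Finset.image_inter _ _ g.injective]
    exact Finset.card_image_of_injective _ g.injective
  rw [h2]
  by_cases he : p = r
  · rw [if_pos he, if_pos (h1.2 he)]
  · rw [if_neg he, if_neg (fun hc => he (h1.1 hc))]

lemma sub_subset_iff (g : Equiv.Perm (Fin m)) (r c : Finset (Fin m)) :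
    permPair g r ⊆ Finset.image (⇑g) c ↔ r ⊆ c := by
  unfold permPair
  exact Finset.image_subset_image_iff g.injective

lemma DeltaZ_equivariant {q : ℕ} (g : Equiv.Perm (Fin m)) (α : PP m q) (r : OO m) :
    DeltaZ q (ppEquiv g α) (pairPermEquiv g r) = DeltaZ q α r := by
  unfold DeltaZ
  have hiff : (∃ c ∈ ((ppEquiv g α : PP m q) : Ptn m), (pairPermEquiv g r).1 ⊆ c)
      ↔ ∃ c ∈ (α : Ptn m), r.1 ⊆ c := by
    show (∃ c ∈ permPart g α.1, permPair g r.1 ⊆ c) ↔ _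
    constructor
    · rintro ⟨c, hc, hsub⟩
      obtain ⟨c₀, hc₀, rfl⟩ := Finset.mem_image.1 hc
      exact ⟨c₀, hc₀, (sub_subset_iff g _ _).1 hsub⟩
    · rintro ⟨c, hc, hsub⟩
      exact ⟨c.image ⇑g, Finset.mem_image.2 ⟨c, hc, rfl⟩, (sub_subset_iff g _ _).2 hsub⟩
  by_cases h : ∃ c ∈ (α : Ptn m), r.1 ⊆ c
  · rw [if_pos h, if_pos (hiff.2 h)]
  · rw [if_neg h, if_neg (fun hc => h (hiff.1 hc))]

variable {H₁ H₂ : Subgroup (Equiv.Perm (Fin m))} {q : ℕ}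

lemma cfun_act {g : Equiv.Perm (Fin m)} (hg : g ∈ H₁) (α : Ptn m) :
    cfun H₁ (permPart g α) = cfun H₁ α :=
  ocode_act permPart_hmul permPart_hone hg α

lemma yfun_act {g : Equiv.Perm (Fin m)} (hg : g ∈ H₂) (p : Finset (Fin m)) :
    yfun H₂ (permPair g p) = yfun H₂ p :=
  ocode_act permPair_hmul permPair_hone hg p

lemma cQf_act {g : Equiv.Perm (Fin m)} (hg : g ∈ H₁) (α : PP m q) :
    cQf H₁ q (ppEquiv g α) = cQf H₁ q α := by
  unfold cQf
  have hmem : ((ppEquiv g α : PP m q) : Ptn m) ∈ P2set m ↔ (α : Ptn m) ∈ P2set m :=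
    permPart_mem_P2set_iff
  by_cases h : (α : Ptn m) ∈ P2set m
  · rw [if_pos h, if_pos (hmem.2 h)]
  · rw [if_neg h, if_neg (fun hc => h (hmem.1 hc))]
    exact cfun_act hg α.1

lemma SZf_act {g : Equiv.Perm (Fin m)} (hg : g ∈ H₁) (r : OO m) :
    SZf H₁ q (pairPermEquiv g r) = SZf H₁ q r := by
  unfold SZf
  rw [← Equiv.sum_comp (ppEquiv (q := q) g)
    (fun α => (cQf H₁ q α : ℤ) * DeltaZ q α (pairPermEquiv g r))]
  refine Finset.sum_congr rfl ?_
  intro α _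
  rw [cQf_act hg, DeltaZ_equivariant]

lemma d0Zf_act {g : Equiv.Perm (Fin m)} (hg1 : g ∈ H₁) (hg2 : g ∈ H₂) (p : OO m) :
    d0Zf H₁ H₂ q (pairPermEquiv g p) = d0Zf H₁ H₂ q p := by
  unfold d0Zf
  rw [← Equiv.sum_comp (pairPermEquiv (m := m) g)
    (fun r => DZ m (pairPermEquiv g p) r * ((yfun H₂ r.1 : ℤ) - SZf H₁ q r))]
  refine Finset.sum_congr rfl ?_
  intro r _
  rw [DZ_equivariant, SZf_act hg1]
  have : yfun H₂ ((pairPermEquiv g r).1) = yfun H₂ r.1 := yfun_act hg2 r.1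
  rw [this]

lemma dNf_act {g : Equiv.Perm (Fin m)} (hg1 : g ∈ H₁) (hg2 : g ∈ H₂) (p : OO m) :
    dNf H₁ H₂ q (pairPermEquiv g p) = dNf H₁ H₂ q p := by
  unfold dNf
  rw [d0Zf_act hg1 hg2]

lemma etaNf_act (hm : 5 ≤ m) {g : Equiv.Perm (Fin m)} (hg1 : g ∈ H₁) (hg2 : g ∈ H₂)
    (α : PP m q) : etaNf H₁ H₂ q (ppEquiv g α) = etaNf H₁ H₂ q α := by
  by_cases h : (α : Ptn m) ∈ P2set m
  · obtain ⟨p, hp⟩ := P2_iff.1 h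
    have hgp : ((ppEquiv g α : PP m q) : Ptn m)
        = {(pairPermEquiv g p).1, ((pairPermEquiv g p).1)ᶜ} := by
      show permPart g α.1 = _
      rw [hp]
      exact permPart_pairPtn g p.1
    rw [etaNf_P2 hm hgp, etaNf_P2 hm hp, dNf_act hg1 hg2]
  · have h2 : ((ppEquiv g α : PP m q) : Ptn m) ∉ P2set m := by
      intro hc
      exact h (permPart_mem_P2set_iff.1 hc)
    rw [etaNf_nonP2 h2, etaNf_nonP2 h]
    show Tm m * cfun H₁ (permPart g α.1) = _
    rw [cfun_act hg1]

end Equivariance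
section KeyLemma
open Finset

variable {m : ℕ} {H₁ H₂ : Subgroup (Equiv.Perm (Fin m))} {q : ℕ}

lemma key_sum (hm : 5 ≤ m) (hq : 2 ≤ q) (t : OO m) :
    ∑ α : PP m q, (etaNf H₁ H₂ q α : ℚ) * Delta α t
      = (Tm m : ℚ) * (yfun H₂ t.1 : ℚ) + 2 * (Rbigf H₁ H₂ q : ℚ) * ((m:ℚ) - 2) := by
  classical
  have hsplit := Finset.sum_filter_add_sum_filter_not Finset.univ
    (fun α : PP m q => (α : Ptn m) ∈ P2set m) (fun α => (etaNf H₁ H₂ q α : ℚ) * Delta α t)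
  -- Part A : the P₂ part equals ∑_p dN p * B t p
  have hA : ∑ p : OO m, (dNf H₁ H₂ q p : ℚ) * Bmat m t p
      = ∑ α ∈ Finset.univ.filter (fun α : PP m q => (α : Ptn m) ∈ P2set m),
          (etaNf H₁ H₂ q α : ℚ) * Delta α t := by
    refine Finset.sum_bij (i := fun p _ => (⟨{p.1, p.1ᶜ}, e2_mem_Pset hm hq p.1 p.2⟩ : PP m q))
      ?_ ?_ ?_ ?_
    · intro p _
      rw [Finset.mem_filter]
      exact ⟨Finset.mem_univ _, e2_mem_P2set p.1 p.2⟩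
    · intro p _ p' _ he
      have : ({p.1, p.1ᶜ} : Ptn m) = {p'.1, p'.1ᶜ} := congrArg Subtype.val he
      exact Subtype.ext (pair_unique hm p.2 p'.2 this)
    · intro α hα
      obtain ⟨p, hp⟩ := P2_iff.1 (Finset.mem_filter.1 hα).2
      exact ⟨p, Finset.mem_univ _, Subtype.ext hp.symm⟩
    · intro p _
      rw [etaNf_P2 hm (α := (⟨{p.1, p.1ᶜ}, e2_mem_Pset hm hq p.1 p.2⟩ : PP m q)) rfl,
        Delta_pairPtn hm hq t p _ rfl]
  -- Part B : the non-P₂ part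
  have hB : ∑ α ∈ Finset.univ.filter (fun α : PP m q => ¬ (α : Ptn m) ∈ P2set m),
        (etaNf H₁ H₂ q α : ℚ) * Delta α t
      = (Tm m : ℚ) * ∑ α : PP m q, (cQf H₁ q α : ℚ) * Delta α t := by
    have h1 : ∀ α ∈ Finset.univ.filter (fun α : PP m q => ¬ (α : Ptn m) ∈ P2set m),
        (etaNf H₁ H₂ q α : ℚ) * Delta α t
          = (Tm m : ℚ) * ((cQf H₁ q α : ℚ) * Delta α t) := by
      intro α hα
      have hn := (Finset.mem_filter.1 hα).2
      rw [etaNf_nonP2 hn]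
      unfold cQf
      rw [if_neg hn]
      push_cast
      ring
    rw [Finset.sum_congr rfl h1]
    rw [← Finset.mul_sum]
    congr 1
    rw [← Finset.sum_filter_add_sum_filter_not Finset.univ
      (fun α : PP m q => (α : Ptn m) ∈ P2set m) (fun α => (cQf H₁ q α : ℚ) * Delta α t)]
    have h0 : ∑ α ∈ Finset.univ.filter (fun α : PP m q => (α : Ptn m) ∈ P2set m),
        (cQf H₁ q α : ℚ) * Delta α t = 0 := by
      apply Finset.sum_eq_zero
      intro α hα
      unfold cQf
      rw [if_pos (Finset.mem_filter.1 hα).2]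
      norm_num
    rw [h0, zero_add]
  -- evaluate Part A
  set v : OO m → ℚ := fun r => (yfun H₂ r.1 : ℚ) - ((SZf H₁ q r : ℤ) : ℚ) with hv
  have hd0 : ∀ p : OO m, ((d0Zf H₁ H₂ q p : ℤ) : ℚ)
      = (Tm m : ℚ) * ∑ r : OO m, Dmat m p r * v r := by
    intro p
    unfold d0Zf
    push_cast
    rw [Finset.mul_sum]
    refine Finset.sum_congr rfl ?_
    intro r _
    rw [DZ_cast hm p r]
    simp only [hv]
    ring
  have hBsum : ∑ p : OO m, Bmat m t p = 2 * ((m:ℚ) - 2) := by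
    have : ∀ p : OO m, Bmat m t p = ind1 t.1 p.1 := fun p => Bmat_eq_ind1 t p
    rw [Finset.sum_congr rfl fun p _ => this p]
    exact sum_ind1 t
  have hmain : ∑ p : OO m, ((d0Zf H₁ H₂ q p : ℤ) : ℚ) * Bmat m t p
      = (Tm m : ℚ) * v t := by
    have step : ∑ p : OO m, ((d0Zf H₁ H₂ q p : ℤ) : ℚ) * Bmat m t p
        = (Tm m : ℚ) * ∑ p : OO m, ∑ r : OO m, Bmat m t p * (Dmat m p r * v r) := by
      rw [Finset.mul_sum]
      refine Finset.sum_congr rfl ?_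
      intro p _
      rw [hd0 p, Finset.mul_sum, Finset.sum_mul, Finset.mul_sum]
      refine Finset.sum_congr rfl ?_
      intro r _
      ring
    rw [step, Finset.sum_comm]
    have step2 : ∀ r : OO m, ∑ p : OO m, Bmat m t p * (Dmat m p r * v r)
        = (if t = r then (1:ℚ) else 0) * v r := by
      intro r
      have : ∑ p : OO m, Bmat m t p * (Dmat m p r * v r)
          = (∑ p : OO m, Bmat m t p * Dmat m p r) * v r := by
        rw [Finset.sum_mul]
        refine Finset.sum_congr rfl ?_
        intro p _
        ring
      rw [this, ← Matrix.mul_apply, Bmat_mul_Dmat hm, Matrix.one_apply]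
    rw [Finset.sum_congr rfl fun r _ => step2 r]
    have : ∑ r : OO m, (if t = r then (1:ℚ) else 0) * v r
        = ∑ r : OO m, (if t = r then v r else 0) := by
      refine Finset.sum_congr rfl ?_
      intro r _
      by_cases h : t = r <;> simp [h]
    rw [this, Finset.sum_ite_eq]
    simp
  -- put everything together
  rw [← hsplit, ← hA, hB]
  have hdn : ∀ p : OO m, (dNf H₁ H₂ q p : ℚ)
      = ((d0Zf H₁ H₂ q p : ℤ) : ℚ) + (Rbigf H₁ H₂ q : ℚ) := by
    intro p
    have := dNf_cast (H₁ := H₁) (H₂ := H₂) (q := q) p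
    have h2 : ((dNf H₁ H₂ q p : ℤ) : ℚ) = ((d0Zf H₁ H₂ q p + (Rbigf H₁ H₂ q : ℤ) : ℤ) : ℚ) := by
      exact_mod_cast congrArg (fun z : ℤ => (z : ℚ)) this
    push_cast at h2 ⊢
    linarith
  have hexp : ∑ p : OO m, (dNf H₁ H₂ q p : ℚ) * Bmat m t p
      = ∑ p : OO m, ((d0Zf H₁ H₂ q p : ℤ) : ℚ) * Bmat m t p
        + (Rbigf H₁ H₂ q : ℚ) * ∑ p : OO m, Bmat m t p := by
    rw [Finset.mul_sum, ← Finset.sum_add_distrib]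
    refine Finset.sum_congr rfl ?_
    intro p _
    rw [hdn p]
    ring
  rw [hexp, hmain, hBsum, hv]
  have hSQ : ((SZf H₁ q t : ℤ) : ℚ) = ∑ α : PP m q, (cQf H₁ q α : ℚ) * Delta α t :=
    SZf_cast t
  simp only []
  rw [hSQ]
  ring

end KeyLemma
section CodeConstr
open Finset

variable {m : ℕ} {A : Type*} [Fintype A] [DecidableEq A]

/-- canonical column for a partition in `PP m (card A)` -/
noncomputable def xcolP (α : PP m (Fintype.card A)) : Fin m → A :=
  xcol α.1 α.2.1 α.2.2

lemma xcolP_eq_iff (α : PP m (Fintype.card A)) (i j : Fin m) :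
    xcolP α i = xcolP α j ↔ ∃ c ∈ (α : Ptn m), i ∈ c ∧ j ∈ c :=
  xcol_eq_iff α.1 α.2.1 α.2.2 i j

lemma partFun_xcolP (α : PP m (Fintype.card A)) : partFun (xcolP α) = α.1 :=
  partFun_xcol α.1 α.2.1 α.2.2

variable (H₁ H₂ : Subgroup (Equiv.Perm (Fin m)))

/-- the index type of the code -/
noncomputable def nnf (q : ℕ) : ℕ :=
  Fintype.card (Σ α : PP m q, Fin (etaNf H₁ H₂ q α))

/-- the index equivalence -/
noncomputable def EEf (q : ℕ) :
    Fin (nnf H₁ H₂ q) ≃ Σ α : PP m q, Fin (etaNf H₁ H₂ q α) :=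
  (Fintype.equivFin _).symm

/-- the code itself -/
noncomputable def lamf : Fin m → Fin (nnf H₁ H₂ (Fintype.card A)) → A :=
  fun i k => xcolP (A := A) ((EEf H₁ H₂ (Fintype.card A)) k).1 i

open Classical in
lemma count_filter (Q : PP m (Fintype.card A) → Prop) :
    ((Finset.univ.filter fun k : Fin (nnf (m := m) H₁ H₂ (Fintype.card A)) =>
        Q ((EEf H₁ H₂ (Fintype.card A)) k).1).card : ℕ)
      = ∑ α : PP m (Fintype.card A), if Q α then etaNf H₁ H₂ (Fintype.card A) α else 0 := by
  classical
  rw [Finset.card_filter]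
  rw [Equiv.sum_comp (EEf H₁ H₂ (Fintype.card A))
    (fun κ : Σ α : PP m (Fintype.card A), Fin (etaNf H₁ H₂ (Fintype.card A) α) =>
      if Q κ.1 then 1 else 0)]
  rw [← Finset.univ_sigma_univ, Finset.sum_sigma]
  refine Finset.sum_congr rfl ?_
  intro α _
  by_cases h : Q α <;> simp [h]

open Classical in
lemma ham_count (i j : Fin m) :
    hammingDist (lamf (A := A) H₁ H₂ i) (lamf (A := A) H₁ H₂ j)
      = ∑ α : PP m (Fintype.card A),
          if xcolP (A := A) α i ≠ xcolP (A := A) α j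
          then etaNf H₁ H₂ (Fintype.card A) α else 0 := by
  classical
  unfold hammingDist
  have h := count_filter (A := A) H₁ H₂
    (fun α => xcolP (A := A) α i ≠ xcolP (A := A) α j)
  refine Eq.trans ?_ (h.trans ?_)
  · congr 1
    ext k
    simp only [Finset.mem_filter, Finset.mem_univ, true_and]
    exact Iff.rfl
  · refine Finset.sum_congr rfl ?_
    intro α _
    by_cases hq : xcolP (A := A) α i = xcolP (A := A) α j <;> simp [hq]

/-- main distance formula -/
lemma ham_formula (hm : 5 ≤ m) (hq : 2 ≤ Fintype.card A) {i j : Fin m} (hij : i ≠ j) :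
    ((hammingDist (lamf (A := A) H₁ H₂ i) (lamf (A := A) H₁ H₂ j) : ℕ) : ℚ)
      = (Tm m : ℚ) * (yfun H₂ {i, j} : ℚ)
        + 2 * (Rbigf H₁ H₂ (Fintype.card A) : ℚ) * ((m:ℚ) - 2) := by
  classical
  rw [ham_count]
  have hpair : ({i, j} : Finset (Fin m)).card = 2 := Finset.card_pair hij
  set t : OO m := ⟨{i, j}, hpair⟩ with ht
  have hpt : ∀ α : PP m (Fintype.card A),
      ((if xcolP (A := A) α i ≠ xcolP (A := A) α j
        then etaNf H₁ H₂ (Fintype.card A) α else 0 : ℕ) : ℚ)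
      = (etaNf H₁ H₂ (Fintype.card A) α : ℚ) * Delta α t := by
    intro α
    have hiff : (∃ c ∈ (α : Ptn m), t.1 ⊆ c) ↔ (xcolP (A := A) α i = xcolP (A := A) α j) := by
      rw [xcolP_eq_iff]
      constructor
      · rintro ⟨c, hc, hsub⟩
        rw [ht] at hsub
        simp only [Finset.insert_subset_iff, Finset.singleton_subset_iff] at hsub
        exact ⟨c, hc, hsub.1, hsub.2⟩
      · rintro ⟨c, hc, hic, hjc⟩
        refine ⟨c, hc, ?_⟩
        rw [ht]
        simp only [Finset.insert_subset_iff, Finset.singleton_subset_iff]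
        exact ⟨hic, hjc⟩
    unfold Delta
    by_cases h : xcolP (A := A) α i = xcolP (A := A) α j
    · rw [if_neg (by simpa using h), if_pos (hiff.2 h)]
      norm_num
    · rw [if_pos h, if_neg (fun hc => h (hiff.1 hc))]
      norm_num
  rw [Nat.cast_sum]
  rw [Finset.sum_congr rfl fun α _ => hpt α]
  exact key_sum hm hq t

end CodeConstr
section MainLemmas
open Finset

variable {m : ℕ} {A : Type*} [Fintype A] [DecidableEq A]
variable {H₁ H₂ : Subgroup (Equiv.Perm (Fin m))}

lemma permPair_pair (g : Equiv.Perm (Fin m)) (i j : Fin m) :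
    permPair g {i, j} = {g i, g j} := by
  unfold permPair
  rw [Finset.image_insert, Finset.image_singleton]

lemma permPart_inv_eq_iff {g : Equiv.Perm (Fin m)} {x β : Ptn m} :
    permPart g⁻¹ x = β ↔ x = permPart g β := by
  constructor
  · rintro rfl
    rw [permPart_inv_cancel]
  · rintro rfl
    rw [permPart_inv_cancel']

lemma mem_image_inv {g : Equiv.Perm (Fin m)} {c : Finset (Fin m)} {i : Fin m} :
    i ∈ c.image ⇑g⁻¹ ↔ g i ∈ c := by
  rw [Finset.mem_image]
  constructor
  · rintro ⟨a, ha, rfl⟩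
    simpa using ha
  · intro h
    exact ⟨g i, h, by simp⟩

lemma exists_class_perm (g : Equiv.Perm (Fin m)) (β : Ptn m) (i j : Fin m) :
    (∃ c ∈ permPart g⁻¹ β, i ∈ c ∧ j ∈ c) ↔ ∃ c ∈ β, g i ∈ c ∧ g j ∈ c := by
  constructor
  · rintro ⟨c, hc, hi, hj⟩
    obtain ⟨c₀, hc₀, rfl⟩ := Finset.mem_image.1 hc
    exact ⟨c₀, hc₀, mem_image_inv.1 hi, mem_image_inv.1 hj⟩
  · rintro ⟨c, hc, hi, hj⟩
    exact ⟨c.image ⇑g⁻¹, Finset.mem_image.2 ⟨c, hc, rfl⟩, mem_image_inv.2 hi, mem_image_inv.2 hj⟩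

/-- characterization of the isometry group of the constructed code -/
lemma iso_iff (hm : 5 ≤ m) (hq : 2 ≤ Fintype.card A) (g : Equiv.Perm (Fin m)) :
    g ∈ IsoSet (lamf (A := A) H₁ H₂)
      ↔ ∀ i j : Fin m, i ≠ j → yfun H₂ {g i, g j} = yfun H₂ {i, j} := by
  have hT : (0:ℚ) < (Tm m : ℚ) := by exact_mod_cast Tm_pos hm
  constructor
  · intro hg i j hij
    have hd := hg i j
    have hgij : g i ≠ g j := fun hc => hij (g.injective hc)
    have h1 := ham_formula (A := A) H₁ H₂ hm hq hgij
    have h2 := ham_formula (A := A) H₁ H₂ hm hq hij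
    rw [hd] at h1
    rw [h2] at h1
    have : (Tm m : ℚ) * (yfun H₂ {g i, g j} : ℚ) = (Tm m : ℚ) * (yfun H₂ {i, j} : ℚ) := by
      linarith
    have := mul_left_cancel₀ (ne_of_gt hT) this
    exact_mod_cast this
  · intro hy
    intro i j
    by_cases hij : i = j
    · subst hij
      rw [hammingDist_self, hammingDist_self]
    · have hgij : g i ≠ g j := fun hc => hij (g.injective hc)
      have h1 := ham_formula (A := A) H₁ H₂ hm hq hgij
      have h2 := ham_formula (A := A) H₁ H₂ hm hq hij
      have : ((hammingDist (lamf (A := A) H₁ H₂ (g i)) (lamf (A := A) H₁ H₂ (g j)) : ℕ) : ℚ)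
          = ((hammingDist (lamf (A := A) H₁ H₂ i) (lamf (A := A) H₁ H₂ j) : ℕ) : ℚ) := by
        rw [h1, h2, hy i j hij]
      exact_mod_cast this

/-- `Iso(C) = H₂` -/
lemma iso_eq (hm : 5 ≤ m) (hq : 2 ≤ Fintype.card A)
    (h₂ : ClosedUnder permPart (P2set m) (H₂ : Set (Equiv.Perm (Fin m)))) :
    IsoSet (lamf (A := A) H₁ H₂) = (H₂ : Set (Equiv.Perm (Fin m))) := by
  ext g
  rw [iso_iff (A := A) hm hq g, SetLike.mem_coe]
  constructor
  · intro hy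
    apply h₂
    intro x hx
    obtain ⟨p, hp, rfl⟩ := hx
    obtain ⟨i, j, hij, rfl⟩ := Finset.card_eq_two.1 hp
    have h1 : yfun H₂ (permPair g {i, j}) = yfun H₂ {i, j} := by
      rw [permPair_pair]
      exact hy i j hij
    obtain ⟨h, hh, hhp⟩ := ocode_eq (H := H₂) permPair_hmul permPair_hone h1.symm
    refine ⟨h, hh, ?_⟩
    rw [permPart_pairPtn, permPart_pairPtn, hhp]
  · intro hg i j hij
    have : ({g i, g j} : Finset (Fin m)) = permPair g {i, j} := (permPair_pair g i j).symm
    rw [this]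
    exact yfun_act hg {i, j}

open Classical in
lemma cnt_eta (α : PP m (Fintype.card A)) :
    ((Finset.univ.filter fun k : Fin (nnf (m := m) H₁ H₂ (Fintype.card A)) =>
        ((((EEf H₁ H₂ (Fintype.card A)) k).1 : PP m (Fintype.card A)) : Ptn m)
          = (α : Ptn m)).card)
      = etaNf H₁ H₂ (Fintype.card A) α := by
  classical
  have h := count_filter (A := A) H₁ H₂ (fun β => (β : Ptn m) = (α : Ptn m))
  refine Eq.trans ?_ (h.trans ?_)
  · congr 1
    ext k
    simp only [Finset.mem_filter, Finset.mem_univ, true_and]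
  · rw [Finset.sum_eq_single α]
    · rw [if_pos rfl]
    · intro β _ hβ
      rw [if_neg (fun hc => hβ (Subtype.ext hc))]
    · intro hα
      exact absurd (Finset.mem_univ α) hα

/-- `Mon(C) ⊆ H₁` -/
lemma mon_sub (hm : 5 ≤ m) (hq : 2 ≤ Fintype.card A)
    (h₁ : ClosedUnder permPart (Pset m (Fintype.card A) \ P2set m)
      (H₁ : Set (Equiv.Perm (Fin m))))
    {g : Equiv.Perm (Fin m)} (hg : g ∈ MonSet (lamf (A := A) H₁ H₂)) :
    g ∈ H₁ := by
  classical
  obtain ⟨hiso, hfn, ⟨π, σ, hmono⟩, hcode⟩ := hg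
  -- each column's partition transforms correctly
  have hpart : ∀ k, permPart g⁻¹ ((((EEf H₁ H₂ (Fintype.card A)) k).1 : Ptn m))
      = (((EEf H₁ H₂ (Fintype.card A)) (π k)).1 : Ptn m) := by
    intro k
    have hcolrel : (fun i' => lamf (A := A) H₁ H₂ i' k) ∘ ⇑g
        = ⇑(σ k) ∘ (fun i' => lamf (A := A) H₁ H₂ i' (π k)) := by
      funext i'
      show lamf (A := A) H₁ H₂ (g i') k = σ k (lamf (A := A) H₁ H₂ i' (π k))
      rw [← hcode i']
      exact hmono (lamf (A := A) H₁ H₂ i') k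
    have h1 : partFun ((fun i' => lamf (A := A) H₁ H₂ i' k) ∘ ⇑g)
        = permPart g⁻¹ (partFun (fun i' => lamf (A := A) H₁ H₂ i' k)) :=
      partFun_comp_perm _ g
    have h2 : partFun (⇑(σ k) ∘ (fun i' => lamf (A := A) H₁ H₂ i' (π k)))
        = partFun (fun i' => lamf (A := A) H₁ H₂ i' (π k)) :=
      partFun_perm_comp _ _
    have h3 : partFun (fun i' => lamf (A := A) H₁ H₂ i' k)
        = (((EEf H₁ H₂ (Fintype.card A)) k).1 : Ptn m) := partFun_xcolP _
    have h4 : partFun (fun i' => lamf (A := A) H₁ H₂ i' (π k))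
        = (((EEf H₁ H₂ (Fintype.card A)) (π k)).1 : Ptn m) := partFun_xcolP _
    rw [← h3, ← h1, hcolrel, h2, h4]
  -- counting is invariant
  have hcnt_inv : ∀ β : Ptn m,
      ((Finset.univ.filter fun k : Fin (nnf (m := m) H₁ H₂ (Fintype.card A)) =>
          ((((EEf H₁ H₂ (Fintype.card A)) k).1 : PP m (Fintype.card A)) : Ptn m)
            = permPart g β).card)
        = ((Finset.univ.filter fun k : Fin (nnf (m := m) H₁ H₂ (Fintype.card A)) =>
            ((((EEf H₁ H₂ (Fintype.card A)) k).1 : PP m (Fintype.card A)) : Ptn m)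
              = β).card) := by
    intro β
    rw [Finset.card_filter, Finset.card_filter]
    rw [← Equiv.sum_comp π (fun k =>
      if ((((EEf H₁ H₂ (Fintype.card A)) k).1 : PP m (Fintype.card A)) : Ptn m)
          = β then (1:ℕ) else 0)]
    refine Finset.sum_congr rfl ?_
    intro k _
    have hiff : ((((EEf H₁ H₂ (Fintype.card A)) (π k)).1 : PP m (Fintype.card A)) : Ptn m) = β
        ↔ ((((EEf H₁ H₂ (Fintype.card A)) k).1 : PP m (Fintype.card A)) : Ptn m)
            = permPart g β := by
      rw [← hpart k, permPart_inv_eq_iff]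
    by_cases hb : ((((EEf H₁ H₂ (Fintype.card A)) k).1 : PP m (Fintype.card A)) : Ptn m)
        = permPart g β
    · rw [if_pos (hiff.2 hb), if_pos hb]
    · rw [if_neg (fun hc => hb (hiff.1 hc)), if_neg hb]
  -- apply closedness
  apply h₁
  intro x hx
  obtain ⟨hxP, hxnP2⟩ := hx
  have hgx_P : permPart g x ∈ Pset m (Fintype.card A) := permPart_mem_Pset g hxP
  have hgx_nP2 : permPart g x ∉ P2set m := fun hc => hxnP2 (permPart_mem_P2set_iff.1 hc)
  have e1 := cnt_eta (A := A) (H₁ := H₁) (H₂ := H₂) ⟨x, hxP⟩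
  have e2 := cnt_eta (A := A) (H₁ := H₁) (H₂ := H₂) ⟨permPart g x, hgx_P⟩
  rw [etaNf_nonP2 hxnP2] at e1
  rw [etaNf_nonP2 hgx_nP2] at e2
  have e3 : Tm m * cfun H₁ (permPart g x) = Tm m * cfun H₁ x := by
    rw [← e1, ← e2]
    exact hcnt_inv x
  have e4 : cfun H₁ (permPart g x) = cfun H₁ x :=
    Nat.eq_of_mul_eq_mul_left (Tm_pos hm) e3
  obtain ⟨hh, hhH, hhe⟩ := ocode_eq (H := H₁) permPart_hmul permPart_hone e4.symm
  exact ⟨hh, hhH, hhe.symm⟩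

end MainLemmas
section FinalLemmas
open Finset

variable {m : ℕ} {A : Type*} [Fintype A] [DecidableEq A]
variable {H₁ H₂ : Subgroup (Equiv.Perm (Fin m))}

lemma mon_sup (hm : 5 ≤ m) {g : Equiv.Perm (Fin m)}
    (hgiso : g ∈ IsoSet (lamf (A := A) H₁ H₂)) (hg1 : g ∈ H₁) (hg2 : g ∈ H₂) :
    g ∈ MonSet (lamf (A := A) H₁ H₂) := by
  classical
  refine ⟨hgiso, ?_⟩
  have hfib : ∀ α : PP m (Fintype.card A),
      etaNf H₁ H₂ (Fintype.card A) α = etaNf H₁ H₂ (Fintype.card A) (ppEquiv g⁻¹ α) :=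
    fun α => (etaNf_act hm (H₁.inv_mem hg1) (H₂.inv_mem hg2) α).symm
  set πK : (Σ α : PP m (Fintype.card A), Fin (etaNf H₁ H₂ (Fintype.card A) α))
      ≃ (Σ α : PP m (Fintype.card A), Fin (etaNf H₁ H₂ (Fintype.card A) α)) :=
    Equiv.sigmaCongr (ppEquiv g⁻¹) (fun α => finCongr (hfib α)) with hπK
  set π : Equiv.Perm (Fin (nnf (m := m) H₁ H₂ (Fintype.card A))) :=
    (EEf H₁ H₂ (Fintype.card A)).trans (πK.trans (EEf H₁ H₂ (Fintype.card A)).symm) with hπ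
  have hσ : ∀ α : PP m (Fintype.card A), ∃ σα : Equiv.Perm A,
      ∀ i, xcolP (A := A) α (g i) = σα (xcolP (A := A) (ppEquiv g⁻¹ α) i) := by
    intro α
    apply exists_perm_of_ker_eq
    intro i j
    rw [xcolP_eq_iff, xcolP_eq_iff]
    exact (exists_class_perm g α.1 i j).symm
  choose σfun hσfun using hσ
  refine ⟨fun a k => σfun ((EEf H₁ H₂ (Fintype.card A)) k).1 (a (π k)),
    ⟨π, fun k => σfun ((EEf H₁ H₂ (Fintype.card A)) k).1, fun a k => rfl⟩, ?_⟩
  intro i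
  funext k
  show σfun ((EEf H₁ H₂ (Fintype.card A)) k).1 (lamf (A := A) H₁ H₂ i (π k))
      = lamf (A := A) H₁ H₂ (g i) k
  have hπk : (EEf H₁ H₂ (Fintype.card A)) (π k) = πK ((EEf H₁ H₂ (Fintype.card A)) k) := by
    rw [hπ]
    simp
  have hfst : (πK ((EEf H₁ H₂ (Fintype.card A)) k)).1
      = ppEquiv g⁻¹ ((EEf H₁ H₂ (Fintype.card A)) k).1 := by
    rw [hπK]
    rcases (EEf H₁ H₂ (Fintype.card A)) k with ⟨α, b⟩
    rfl
  show σfun ((EEf H₁ H₂ (Fintype.card A)) k).1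
      (xcolP (A := A) ((EEf H₁ H₂ (Fintype.card A)) (π k)).1 i)
    = xcolP (A := A) ((EEf H₁ H₂ (Fintype.card A)) k).1 (g i)
  rw [hπk, hfst]
  exact (hσfun ((EEf H₁ H₂ (Fintype.card A)) k).1 i).symm

lemma lamf_inj (hm : 5 ≤ m) (hq : 2 ≤ Fintype.card A) :
    Function.Injective (lamf (A := A) H₁ H₂) := by
  classical
  intro i j hij
  by_contra hne
  have hex : ∃ s : Fin m, s ∉ ({i, j} : Finset (Fin m)) := by
    by_contra hc
    push_neg at hc
    have hsub : (Finset.univ : Finset (Fin m)) ⊆ {i, j} := fun s _ => hc s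
    have := Finset.card_le_card hsub
    rw [Finset.card_univ, Fintype.card_fin] at this
    have h2 : ({i, j} : Finset (Fin m)).card ≤ 2 := by
      refine le_trans (Finset.card_insert_le _ _) ?_
      simp
    omega
  obtain ⟨s, hs⟩ := hex
  have hsi : s ≠ i := fun hc => hs (by rw [hc]; exact Finset.mem_insert_self _ _)
  have hsj : s ≠ j := fun hc => hs (by
    rw [hc]
    exact Finset.mem_insert_of_mem (Finset.mem_singleton_self _))
  have hp : ({i, s} : Finset (Fin m)).card = 2 := Finset.card_pair (fun hc => hsi hc.symm)
  set α : PP m (Fintype.card A) :=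
    ⟨{({i, s} : Finset (Fin m)), ({i, s} : Finset (Fin m))ᶜ}, e2_mem_Pset hm hq _ hp⟩ with hα
  have hpos : 0 < etaNf H₁ H₂ (Fintype.card A) α := by
    rw [etaNf_P2 hm (p := ⟨{i, s}, hp⟩) rfl]
    exact dNf_pos _
  set k : Fin (nnf (m := m) H₁ H₂ (Fintype.card A)) :=
    (EEf H₁ H₂ (Fintype.card A)).symm ⟨α, ⟨0, hpos⟩⟩ with hk
  have hEk : (EEf H₁ H₂ (Fintype.card A)) k = ⟨α, ⟨0, hpos⟩⟩ := by
    rw [hk]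
    exact (EEf H₁ H₂ (Fintype.card A)).apply_symm_apply _
  have hval : xcolP (A := A) α i = xcolP (A := A) α j := by
    have h2 : xcolP (A := A) ((EEf H₁ H₂ (Fintype.card A)) k).1 i
        = xcolP (A := A) ((EEf H₁ H₂ (Fintype.card A)) k).1 j := congrFun hij k
    rw [hEk] at h2
    exact h2
  rw [xcolP_eq_iff] at hval
  obtain ⟨c, hc, hic, hjc⟩ := hval
  rcases Finset.mem_insert.1 hc with h' | h'
  · rw [h'] at hjc
    rcases Finset.mem_insert.1 hjc with h'' | h''
    · exact hne h''.symm
    · exact hsj (Finset.mem_singleton.1 h'').symm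
  · rw [Finset.mem_singleton.1 h'] at hic
    exact (Finset.mem_compl.1 hic) (Finset.mem_insert_self _ _)

lemma nnf_pos (hm : 5 ≤ m) (hq : 2 ≤ Fintype.card A) :
    0 < nnf (m := m) H₁ H₂ (Fintype.card A) := by
  rw [nnf, Fintype.card_pos_iff]
  have h01 : ((⟨0, by omega⟩ : Fin m) : Fin m) ≠ ⟨1, by omega⟩ := by
    intro hc
    have := congrArg Fin.val hc
    simp at this
  have hp : ({(⟨0, by omega⟩ : Fin m), ⟨1, by omega⟩} : Finset (Fin m)).card = 2 :=
    Finset.card_pair h01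
  refine ⟨⟨⟨_, e2_mem_Pset hm hq _ hp⟩, ⟨0, ?_⟩⟩⟩
  rw [etaNf_P2 hm (p := ⟨_, hp⟩) rfl]
  exact dNf_pos _

end FinalLemmas
/-- For `m ≥ 5` and any subgroups `H₁`, `H₂` of `S(M)` closed under the actions
on `P ∖ P₂` and `P₂` respectively, there is a code `C` of cardinality `m` with
`Mon(C) = H₁ ∩ Iso(C)` and `Iso(C) = H₂`. -/
theorem exists_code_with_prescribed_groups {A : Type*} [Fintype A] [DecidableEq A]
    (hq : 2 ≤ Fintype.card A) {m : ℕ} (hm : 5 ≤ m)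
    (H₁ H₂ : Subgroup (Equiv.Perm (Fin m)))
    (h₁ : ClosedUnder permPart (Pset m (Fintype.card A) \ P2set m)
      (H₁ : Set (Equiv.Perm (Fin m))))
    (h₂ : ClosedUnder permPart (P2set m) (H₂ : Set (Equiv.Perm (Fin m)))) :
    ∃ n : ℕ, 0 < n ∧ ∃ lam : Fin m → Fin n → A, Function.Injective lam ∧
      MonSet lam = (H₁ : Set (Equiv.Perm (Fin m))) ∩ IsoSet lam ∧
      IsoSet lam = (H₂ : Set (Equiv.Perm (Fin m))) := by
  refine ⟨nnf (m := m) H₁ H₂ (Fintype.card A), nnf_pos hm hq,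
    lamf (A := A) H₁ H₂, lamf_inj hm hq, ?_, iso_eq hm hq h₂⟩
  ext g
  constructor
  · intro hg
    exact ⟨mon_sub hm hq h₁ hg, hg.1⟩
  · rintro ⟨hg1, hgiso⟩
    have hg2 : g ∈ H₂ := by
      have := iso_eq (A := A) (H₁ := H₁) (H₂ := H₂) hm hq h₂
      rw [this] at hgiso
      exact hgiso
    exact mon_sup hm hgiso hg1 hg2
end

section
/- Let A be a finite alphabet of cardinality q ≥ 2. For every integer m ≥ 5 there exist a positive integer n and a code C ⊆ A^n of cardinality m (with some encoding bijection λ : M → C) such that Iso(C) = S(M) is the full symmetric group and Mon(C) = {e} is the trivial group. -/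
namespace AsymCode

open Finset

/-- Column given by the indicator of a subset. -/
def col {m : ℕ} {A : Type*} [DecidableEq (Fin m)] (a0 a1 : A) (p : Finset (Fin m)) :
    Fin m → A := fun u => if u ∈ p then a0 else a1

def wgt (m : ℕ) (i : Fin m) : ℕ := (m - 4) * (m - i.val)

abbrev Idx (m : ℕ) : Type :=
  (Σ i : Fin m, Fin (wgt m i)) ⊕
  (Σ pr : Fin m × Fin m, Fin (if pr.1 = pr.2 then 0 else pr.1.val))

def pset {m : ℕ} : Idx m → Finset (Fin m)
  | .inl ⟨i, _⟩ => {i}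
  | .inr ⟨pr, _⟩ => {pr.1, pr.2}

lemma sum_idx {m : ℕ} (f : Finset (Fin m) → ℕ) :
    ∑ ι : Idx m, f (pset ι)
      = (∑ i : Fin m, wgt m i * f {i}) +
        ∑ pr : Fin m × Fin m, (if pr.1 = pr.2 then 0 else pr.1.val) * f {pr.1, pr.2} := by
  rw [Fintype.sum_sum_type]
  congr 1
  · rw [← Finset.univ_sigma_univ, Finset.sum_sigma]
    exact Finset.sum_congr rfl fun i _ => by
      simp [pset, Finset.sum_const, mul_comm]
  · rw [← Finset.univ_sigma_univ, Finset.sum_sigma]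
    exact Finset.sum_congr rfl fun pr _ => by
      simp [pset, Finset.sum_const, mul_comm]

lemma col_ne_iff {m : ℕ} {A : Type*} [DecidableEq A] {a0 a1 : A} (h01 : a0 ≠ a1)
    (p : Finset (Fin m)) (u v : Fin m) :
    col a0 a1 p u ≠ col a0 a1 p v ↔ ¬(u ∈ p ↔ v ∈ p) := by
  unfold col
  by_cases hu : u ∈ p <;> by_cases hv : v ∈ p <;> simp [hu, hv, h01, h01.symm]


def fib {m : ℕ} {A : Type*} [DecidableEq A] (x : Fin m → A) (u : Fin m) : Finset (Fin m) :=
  Finset.univ.filter fun v => x v = x u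

def smallS {m : ℕ} {A : Type*} [DecidableEq A] (x : Fin m → A) : Finset (Fin m) :=
  Finset.univ.filter fun u => (fib x u).card = 1

lemma smallS_comp_left {m : ℕ} {A : Type*} [DecidableEq A] (s : Equiv.Perm A) (x : Fin m → A) :
    smallS (fun u => s (x u)) = smallS x := by
  unfold smallS fib
  simp [s.injective.eq_iff]

lemma mem_smallS_comp_right {m : ℕ} {A : Type*} [DecidableEq A] (g : Equiv.Perm (Fin m))
    (x : Fin m → A) (u : Fin m) :
    u ∈ smallS (fun v => x (g v)) ↔ g u ∈ smallS x := by
  unfold smallS fib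
  simp only [Finset.mem_filter, Finset.mem_univ, true_and]
  have : (Finset.univ.filter fun v => x (g v) = x (g u)).card
      = (Finset.univ.filter fun w => x w = x (g u)).card :=
    Finset.card_equiv g (by simp)
  rw [this]

lemma smallS_col_singleton {m : ℕ} {A : Type*} [DecidableEq A] {a0 a1 : A}
    (hm : 5 ≤ m) (h01 : a0 ≠ a1) (i : Fin m) :
    smallS (col a0 a1 ({i} : Finset (Fin m))) = {i} := by
  have hfib : ∀ u : Fin m, fib (col a0 a1 ({i} : Finset (Fin m))) u
      = if u = i then {i} else ({i}ᶜ : Finset (Fin m)) := by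
    intro u
    by_cases hu : u = i <;>
      · ext v
        by_cases hv : v = i <;> simp [fib, col, hu, hv, h01, h01.symm]
  ext u
  simp only [smallS, Finset.mem_filter, Finset.mem_univ, true_and, hfib u,
    Finset.mem_singleton]
  by_cases hu : u = i
  · simp [hu]
  · have : ({i}ᶜ : Finset (Fin m)).card = m - 1 := by
      rw [Finset.card_compl]
      simp
    simp only [hu, if_false, this, iff_false]
    omega

lemma smallS_col_pair {m : ℕ} {A : Type*} [DecidableEq A] {a0 a1 : A}
    (hm : 5 ≤ m) (h01 : a0 ≠ a1) {i j : Fin m} (hij : i ≠ j) :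
    smallS (col a0 a1 ({i, j} : Finset (Fin m))) = ∅ := by
  have hfib : ∀ u : Fin m, fib (col a0 a1 ({i, j} : Finset (Fin m))) u
      = if u ∈ ({i, j} : Finset (Fin m)) then ({i, j} : Finset (Fin m))
        else ({i, j}ᶜ : Finset (Fin m)) := by
    intro u
    by_cases hu : u ∈ ({i, j} : Finset (Fin m)) <;>
      · ext v
        by_cases hv : v ∈ ({i, j} : Finset (Fin m)) <;>
          · simp only [Finset.mem_insert, Finset.mem_singleton, not_or] at hv
            simp [fib, col, hu, hv, h01, h01.symm]
            try tauto
  ext u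
  simp only [smallS, Finset.mem_filter, Finset.mem_univ, true_and, hfib u,
    Finset.notMem_empty, iff_false]
  by_cases hu : u ∈ ({i, j} : Finset (Fin m))
  · simp only [hu, if_true, Finset.card_pair hij]
    omega
  · have : ({i, j}ᶜ : Finset (Fin m)).card = m - 2 := by
      rw [Finset.card_compl, Finset.card_pair hij]
      simp
    simp only [hu, if_false, this]
    omega


noncomputable def eIdx (m : ℕ) : Fin (Fintype.card (Idx m)) ≃ Idx m :=
  (Fintype.equivFin (Idx m)).symm

noncomputable def lamDef (m : ℕ) {A : Type*} [DecidableEq A] (a0 a1 : A) :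
    Fin m → Fin (Fintype.card (Idx m)) → A :=
  fun u k => col a0 a1 (pset (eIdx m k)) u

lemma card_filter_idx {m : ℕ} (Q : Finset (Fin m) → Prop) [DecidablePred Q] :
    (Finset.univ.filter fun k : Fin (Fintype.card (Idx m)) => Q (pset (eIdx m k))).card
      = (∑ i : Fin m, wgt m i * (if Q {i} then 1 else 0)) +
        ∑ pr : Fin m × Fin m,
          (if pr.1 = pr.2 then 0 else pr.1.val) * (if Q {pr.1, pr.2} then 1 else 0) := by
  rw [Finset.card_equiv (eIdx m) (by simp)
    (t := Finset.univ.filter fun ι : Idx m => Q (pset ι))]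
  rw [Finset.card_filter]
  exact sum_idx (fun p => if Q p then 1 else 0)


lemma sum_ite_pair {m : ℕ} {u v : Fin m} (huv : u ≠ v) (c d : ℕ) :
    (∑ j : Fin m, if j = u ∨ j = v then c else d) = 2 * c + (m - 2) * d := by
  rw [Finset.sum_ite]
  have h1 : (Finset.univ.filter fun j : Fin m => j = u ∨ j = v) = {u, v} := by
    ext j; simp
  have h2 : (Finset.univ.filter fun j : Fin m => ¬(j = u ∨ j = v))
      = ({u, v} : Finset (Fin m))ᶜ := by
    ext j; simp
  rw [h1, h2, Finset.sum_const, Finset.sum_const, Finset.card_pair huv,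
    Finset.card_compl, Finset.card_pair huv]
  simp [smul_eq_mul]

set_option maxHeartbeats 1000000 in
lemma ite_term {m : ℕ} {u v i j : Fin m} (huv : u ≠ v) :
    ((if i = j then 0 else i.val) * (if ¬((u = i ∨ u = j) ↔ (v = i ∨ v = j)) then 1 else 0))
      = if i = u ∨ i = v then (if j = u ∨ j = v then 0 else i.val)
        else (if j = u ∨ j = v then i.val else 0) := by
  by_cases h1 : i = u <;> by_cases h2 : i = v <;> by_cases h3 : j = u <;>
    by_cases h4 : j = v <;> by_cases h5 : i = j <;> simp_all <;> tauto

lemma dist_lemma {m : ℕ} {A : Type*} [DecidableEq A] {a0 a1 : A}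
    (hm : 5 ≤ m) (h01 : a0 ≠ a1) {u v : Fin m} (huv : u ≠ v) :
    hammingDist (lamDef m a0 a1 u) (lamDef m a0 a1 v)
      = (m - 4) * (2 * m) + ∑ i : Fin m, 2 * i.val := by
  have h0 : hammingDist (lamDef m a0 a1 u) (lamDef m a0 a1 v)
      = (Finset.univ.filter fun k : Fin (Fintype.card (Idx m)) =>
          col a0 a1 (pset (eIdx m k)) u ≠ col a0 a1 (pset (eIdx m k)) v).card := rfl
  rw [h0, card_filter_idx (Q := fun p => col a0 a1 p u ≠ col a0 a1 p v)]
  have hs1 : (∑ i : Fin m, wgt m i *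
        (if col a0 a1 ({i} : Finset (Fin m)) u ≠ col a0 a1 {i} v then 1 else 0))
      = wgt m u + wgt m v := by
    have hc : ∀ i : Fin m, wgt m i *
          (if col a0 a1 ({i} : Finset (Fin m)) u ≠ col a0 a1 {i} v then 1 else 0)
        = if i ∈ ({u, v} : Finset (Fin m)) then wgt m i else 0 := by
      intro i
      have hiff : (col a0 a1 ({i} : Finset (Fin m)) u ≠ col a0 a1 {i} v)
          ↔ i ∈ ({u, v} : Finset (Fin m)) := by
        rw [col_ne_iff h01]
        simp only [Finset.mem_singleton, Finset.mem_insert]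
        constructor
        · intro h
          by_cases h1 : u = i
          · exact Or.inl h1.symm
          · by_cases h2 : v = i
            · exact Or.inr h2.symm
            · exact absurd (iff_of_false h1 h2) h
        · rintro (rfl | rfl)
          · intro h; exact huv (h.mp rfl).symm
          · intro h; exact huv (h.mpr rfl)
      simp only [hiff]
      by_cases h : i ∈ ({u, v} : Finset (Fin m)) <;> simp [h]
    rw [Finset.sum_congr rfl fun i _ => hc i, Finset.sum_ite_mem, Finset.univ_inter,
      Finset.sum_pair huv]
  have hs2 : (∑ pr : Fin m × Fin m, (if pr.1 = pr.2 then 0 else pr.1.val) *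
        (if col a0 a1 ({pr.1, pr.2} : Finset (Fin m)) u ≠ col a0 a1 {pr.1, pr.2} v
          then 1 else 0))
      = (∑ i : Fin m, 2 * i.val) + (u.val * (m - 4) + v.val * (m - 4)) := by
    rw [Fintype.sum_prod_type]
    have hne : ∀ i j : Fin m, (col a0 a1 ({i, j} : Finset (Fin m)) u ≠ col a0 a1 {i, j} v)
        ↔ ¬((u = i ∨ u = j) ↔ (v = i ∨ v = j)) := by
      intro i j
      rw [col_ne_iff h01]
      simp
    have hterm : ∀ i j : Fin m, ((if i = j then 0 else i.val) *
          (if col a0 a1 ({i, j} : Finset (Fin m)) u ≠ col a0 a1 {i, j} v then 1 else 0))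
        = if i = u ∨ i = v then (if j = u ∨ j = v then 0 else i.val)
          else (if j = u ∨ j = v then i.val else 0) := by
      intro i j
      simp only [hne i j]
      exact ite_term huv
    have hinner : ∀ i : Fin m, (∑ j : Fin m, (if i = j then 0 else i.val) *
          (if col a0 a1 ({i, j} : Finset (Fin m)) u ≠ col a0 a1 {i, j} v then 1 else 0))
        = if i = u ∨ i = v then i.val * (m - 2) else i.val * 2 := by
      intro i
      rw [Finset.sum_congr rfl fun j _ => hterm i j]
      by_cases h : i = u ∨ i = v
      · simp only [h, if_true]
        rw [sum_ite_pair huv 0 i.val]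
        ring
      · simp only [h, if_false]
        rw [sum_ite_pair huv i.val 0]
        ring
    rw [Finset.sum_congr rfl fun i _ => hinner i]
    have hsplit : ∀ i : Fin m, (if i = u ∨ i = v then i.val * (m - 2) else i.val * 2)
        = 2 * i.val + (if i ∈ ({u, v} : Finset (Fin m)) then i.val * (m - 4) else 0) := by
      intro i
      have hmem : (i = u ∨ i = v) ↔ i ∈ ({u, v} : Finset (Fin m)) := by simp
      by_cases h : i = u ∨ i = v
      · simp only [h, if_true, hmem.mp h, if_pos]
        rw [show m - 2 = 2 + (m - 4) by omega, Nat.mul_add]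
        ring
      · simp only [h, if_false, if_neg (fun hh => h (hmem.mpr hh))]
        ring
    rw [Finset.sum_congr rfl fun i _ => hsplit i, Finset.sum_add_distrib,
      Finset.sum_ite_mem, Finset.univ_inter, Finset.sum_pair huv]
  rw [hs1, hs2]
  have key : ∀ x : Fin m, wgt m x + x.val * (m - 4) = (m - 4) * m := by
    intro x
    unfold wgt
    rw [mul_comm x.val, ← Nat.mul_add]
    congr 1
    have := x.isLt
    omega
  have h2 : (m - 4) * (2 * m) = ((wgt m u + u.val * (m - 4)) + (wgt m v + v.val * (m - 4))) := by
    rw [key u, key v]; ring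
  rw [h2]
  ring


lemma cnt_eq {m : ℕ} {A : Type*} [DecidableEq A] {a0 a1 : A}
    (hm : 5 ≤ m) (h01 : a0 ≠ a1) (i : Fin m) :
    (Finset.univ.filter fun k : Fin (Fintype.card (Idx m)) =>
        smallS (col a0 a1 (pset (eIdx m k))) = ({i} : Finset (Fin m))).card = wgt m i := by
  rw [card_filter_idx (Q := fun p => smallS (col a0 a1 p) = {i})]
  have hs1 : (∑ j : Fin m, wgt m j *
        (if smallS (col a0 a1 ({j} : Finset (Fin m))) = ({i} : Finset (Fin m))
          then 1 else 0)) = wgt m i := by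
    have hc : ∀ j : Fin m, wgt m j *
          (if smallS (col a0 a1 ({j} : Finset (Fin m))) = ({i} : Finset (Fin m))
            then 1 else 0)
        = if j = i then wgt m j else 0 := by
      intro j
      rw [smallS_col_singleton hm h01]
      by_cases h : j = i
      · simp [h]
      · simp [h, Finset.singleton_injective.ne h]
    rw [Finset.sum_congr rfl fun j _ => hc j, Finset.sum_ite_eq' Finset.univ i (fun j => wgt m j)]
    simp
  have hs2 : (∑ pr : Fin m × Fin m, (if pr.1 = pr.2 then 0 else pr.1.val) *
        (if smallS (col a0 a1 ({pr.1, pr.2} : Finset (Fin m))) = ({i} : Finset (Fin m))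
          then 1 else 0)) = 0 := by
    apply Finset.sum_eq_zero
    intro pr _
    by_cases h : pr.1 = pr.2
    · simp [h]
    · rw [smallS_col_pair hm h01 h]
      have hne : (∅ : Finset (Fin m)) ≠ {i} := (Finset.singleton_ne_empty i).symm
      simp [hne]
  rw [hs1, hs2]
  ring

end AsymCode

/-- For every `m ≥ 5` there is a code of cardinality `m` with
`Iso(C) = S(M)` and `Mon(C) = {e}`. -/
theorem exists_code_full_iso_trivial_mon {A : Type*} [Fintype A] [DecidableEq A]
    (hq : 2 ≤ Fintype.card A) {m : ℕ} (hm : 5 ≤ m) :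
    ∃ n : ℕ, 0 < n ∧ ∃ lam : Fin m → Fin n → A, Function.Injective lam ∧
      IsoSet lam = (Set.univ : Set (Equiv.Perm (Fin m))) ∧
      MonSet lam = ({1} : Set (Equiv.Perm (Fin m))) := by
  obtain ⟨a0, a1, h01⟩ := Fintype.exists_pair_of_one_lt_card (by omega : 1 < Fintype.card A)
  refine ⟨Fintype.card (AsymCode.Idx m), ?_, AsymCode.lamDef m a0 a1, ?_, ?_, ?_⟩
  · have : Nonempty (AsymCode.Idx m) := by
      refine ⟨Sum.inl ⟨⟨0, by omega⟩, ⟨0, ?_⟩⟩⟩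
      show 0 < AsymCode.wgt m ⟨0, by omega⟩
      have h0 : AsymCode.wgt m ⟨0, by omega⟩ = (m - 4) * (m - 0) := rfl
      rw [h0]
      exact Nat.mul_pos (by omega) (by omega)
    exact Fintype.card_pos
  · intro u v huv
    by_contra hne
    have hd := AsymCode.dist_lemma hm h01 hne
    rw [huv, hammingDist_self] at hd
    have hpos : 0 < (m - 4) * (2 * m) := Nat.mul_pos (by omega) (by omega)
    omega
  · ext g
    simp only [Set.mem_univ, iff_true, IsoSet, Set.mem_setOf_eq]
    intro i j
    by_cases hij : i = j
    · subst hij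
      rw [hammingDist_self, hammingDist_self]
    · rw [AsymCode.dist_lemma hm h01 (fun h => hij (g.injective h)),
        AsymCode.dist_lemma hm h01 hij]
  · ext g
    simp only [Set.mem_singleton_iff]
    constructor
    · rintro ⟨-, h, ⟨π, σ, hmon⟩, hcomm⟩
      have key : ∀ (k : Fin (Fintype.card (AsymCode.Idx m))) (u : Fin m),
          AsymCode.col a0 a1 (AsymCode.pset (AsymCode.eIdx m k)) (g u)
            = σ k (AsymCode.col a0 a1 (AsymCode.pset (AsymCode.eIdx m (π k))) u) := by
        intro k u
        have h1 := congrFun (hcomm u) k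
        rw [hmon] at h1
        exact h1.symm
      have hsm : ∀ (k : Fin (Fintype.card (AsymCode.Idx m))) (i : Fin m),
          (AsymCode.smallS (AsymCode.col a0 a1 (AsymCode.pset (AsymCode.eIdx m (π k))))
              = ({i} : Finset (Fin m)))
            ↔ AsymCode.smallS (AsymCode.col a0 a1 (AsymCode.pset (AsymCode.eIdx m k)))
              = ({g i} : Finset (Fin m)) := by
        intro k i
        have h1 : ∀ u : Fin m,
            u ∈ AsymCode.smallS (AsymCode.col a0 a1 (AsymCode.pset (AsymCode.eIdx m (π k))))
              ↔ g u ∈ AsymCode.smallS (AsymCode.col a0 a1 (AsymCode.pset (AsymCode.eIdx m k))) := by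
          intro u
          have e2 : (fun w => AsymCode.col a0 a1 (AsymCode.pset (AsymCode.eIdx m k)) (g w))
              = fun w => σ k (AsymCode.col a0 a1 (AsymCode.pset (AsymCode.eIdx m (π k))) w) :=
            funext fun w => key k w
          have e1 : AsymCode.smallS
                (fun w => AsymCode.col a0 a1 (AsymCode.pset (AsymCode.eIdx m k)) (g w))
              = AsymCode.smallS (AsymCode.col a0 a1 (AsymCode.pset (AsymCode.eIdx m (π k)))) := by
            rw [e2, AsymCode.smallS_comp_left]
          rw [← e1]
          exact AsymCode.mem_smallS_comp_right g _ u
        constructor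
        · intro h2
          ext w
          rw [Finset.mem_singleton]
          have h3 := h1 (g.symm w)
          rw [h2, g.apply_symm_apply] at h3
          simp only [Finset.mem_singleton] at h3
          rw [← h3]
          exact g.symm_apply_eq
        · intro h2
          ext w
          rw [Finset.mem_singleton]
          have h3 := h1 w
          rw [h2] at h3
          simp only [Finset.mem_singleton] at h3
          rw [h3]
          exact ⟨fun hh => g.injective hh, fun hh => by rw [hh]⟩
      have hwgt : ∀ i : Fin m, AsymCode.wgt m (g i) = AsymCode.wgt m i := by
        intro i
        rw [← AsymCode.cnt_eq hm h01 (g i), ← AsymCode.cnt_eq hm h01 i]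
        exact Finset.card_equiv π (fun k => by
          simp only [Finset.mem_filter, Finset.mem_univ, true_and]
          exact (hsm k i).symm)
      have hg : ∀ i : Fin m, g i = i := by
        intro i
        have h4 := hwgt i
        unfold AsymCode.wgt at h4
        have h5 : m - (g i).val = m - i.val := Nat.eq_of_mul_eq_mul_left (by omega) h4
        have h6 := (g i).isLt
        have h7 := i.isLt
        exact Fin.ext (by omega)
      exact Equiv.ext hg
    · rintro rfl
      exact ⟨fun i j => rfl, id,
        ⟨Equiv.refl _, fun _ => Equiv.refl _, fun a k => rfl⟩, fun i => rfl⟩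
end

section
/- Let A be a finite alphabet of cardinality q ≥ 2 and let m be an integer with m ≥ 5 or m = 3, M = {1,...,m}. For each subgroup H ≤ S(M) that is closed under the action on P_2, there exist a positive integer n and a code C ⊆ A^n of cardinality m (with some encoding bijection λ : M → C) such that Mon(C) = Iso(C) = H. -/
section Aux



open Classical in
noncomputable def D2 {m : ℕ} (p : Finset (Fin m)) (i j : Fin m) : ℕ :=
  if (i ∈ p ↔ j ∈ p) then 0 else 1

def pairPerm {m : ℕ} (g : Equiv.Perm (Fin m)) : OO m ≃ OO m where
  toFun t := ⟨t.1.image g, by rw [Finset.card_image_of_injective _ g.injective]; exact t.2⟩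
  invFun t := ⟨t.1.image g.symm, by
    rw [Finset.card_image_of_injective _ g.symm.injective]; exact t.2⟩
  left_inv t := by
    apply Subtype.ext
    simp [Finset.image_image]
  right_inv t := by
    apply Subtype.ext
    simp [Finset.image_image]

lemma mem_image_perm {m : ℕ} {s : Finset (Fin m)} (g : Equiv.Perm (Fin m)) (i : Fin m) :
    g i ∈ s.image g ↔ i ∈ s := by
  constructor
  · rintro h
    obtain ⟨b, hb, hbi⟩ := Finset.mem_image.1 h
    rwa [← g.injective hbi]
  · intro h; exact Finset.mem_image_of_mem _ h

lemma D2_image {m : ℕ} (g : Equiv.Perm (Fin m)) (s : Finset (Fin m)) (i j : Fin m) :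
    D2 (s.image g) (g i) (g j) = D2 s i j := by
  unfold D2
  congr 1
  rw [eq_iff_iff, mem_image_perm, mem_image_perm]

open Classical in
noncomputable def orb {m : ℕ} (H : Subgroup (Equiv.Perm (Fin m))) (p : Finset (Fin m)) :
    Finset (Finset (Fin m)) :=
  Finset.univ.filter fun s => ∃ h ∈ H, p.image h = s

lemma mem_orb {m : ℕ} (H : Subgroup (Equiv.Perm (Fin m))) (p s : Finset (Fin m)) :
    s ∈ orb H p ↔ ∃ h ∈ H, p.image h = s := by
  classical
  simp [orb]

lemma mem_orb_self {m : ℕ} (H : Subgroup (Equiv.Perm (Fin m))) (p : Finset (Fin m)) :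
    p ∈ orb H p := by
  rw [mem_orb]
  exact ⟨1, H.one_mem, by simp⟩

lemma orb_image {m : ℕ} (H : Subgroup (Equiv.Perm (Fin m))) (p : Finset (Fin m))
    {h : Equiv.Perm (Fin m)} (hh : h ∈ H) : orb H (p.image h) = orb H p := by
  ext s
  rw [mem_orb, mem_orb]
  constructor
  · rintro ⟨h', hh', rfl⟩
    refine ⟨h' * h, H.mul_mem hh' hh, ?_⟩
    rw [Finset.image_image]
    rfl
  · rintro ⟨h', hh', rfl⟩
    refine ⟨h' * h⁻¹, H.mul_mem hh' (H.inv_mem hh), ?_⟩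
    rw [Finset.image_image]
    congr 1
    ext x
    simp [Equiv.Perm.mul_apply]

noncomputable def wgt {m : ℕ} (H : Subgroup (Equiv.Perm (Fin m))) (p : Finset (Fin m)) : ℕ :=
  1 + (Fintype.equivFin (Finset (Finset (Fin m))) (orb H p)).val

lemma wgt_pos {m : ℕ} (H : Subgroup (Equiv.Perm (Fin m))) (p : Finset (Fin m)) :
    0 < wgt H p := by unfold wgt; omega

lemma orb_eq_of_wgt_eq {m : ℕ} (H : Subgroup (Equiv.Perm (Fin m))) {p q : Finset (Fin m)}
    (h : wgt H p = wgt H q) : orb H p = orb H q := by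
  unfold wgt at h
  have := Nat.add_left_cancel h
  exact (Fintype.equivFin (Finset (Finset (Fin m)))).injective (Fin.val_injective this)

lemma wgt_image {m : ℕ} (H : Subgroup (Equiv.Perm (Fin m))) (p : Finset (Fin m))
    {h : Equiv.Perm (Fin m)} (hh : h ∈ H) : wgt H (p.image h) = wgt H p := by
  unfold wgt
  rw [orb_image H p hh]

section CodeConstr

variable {m : ℕ} {A : Type*} [Fintype A] [DecidableEq A]
variable (H : Subgroup (Equiv.Perm (Fin m))) (a₀ a₁ : A)

noncomputable def nn (H : Subgroup (Equiv.Perm (Fin m))) : ℕ := ∑ p : OO m, wgt H p.1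

noncomputable def ee (H : Subgroup (Equiv.Perm (Fin m))) :
    (Σ p : OO m, Fin (wgt H p.1)) ≃ Fin (nn H) :=
  Fintype.equivFinOfCardEq (by simp [Fintype.card_sigma, nn])

noncomputable def lamC : Fin m → Fin (nn H) → A := fun i k =>
  if i ∈ ((ee H).symm k).1.1 then a₀ else a₁

lemma hamming_formula (hA : a₀ ≠ a₁) (i j : Fin m) :
    hammingDist (lamC H a₀ a₁ i) (lamC H a₀ a₁ j) = ∑ t : OO m, wgt H t.1 * D2 t.1 i j := by
  classical
  rw [hammingDist]
  rw [Finset.card_filter]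
  rw [← Equiv.sum_comp (ee H) (fun k => if lamC H a₀ a₁ i k ≠ lamC H a₀ a₁ j k then 1 else 0)]
  rw [← Finset.univ_sigma_univ, Finset.sum_sigma]
  refine Finset.sum_congr rfl (fun t _ => ?_)
  have hpt : ∀ l : Fin (wgt H t.1),
      (if lamC H a₀ a₁ i (ee H ⟨t, l⟩) ≠ lamC H a₀ a₁ j (ee H ⟨t, l⟩) then 1 else 0)
        = D2 t.1 i j := by
    intro l
    unfold lamC
    rw [Equiv.symm_apply_apply]
    unfold D2
    by_cases hi : i ∈ t.1 <;> by_cases hj : j ∈ t.1 <;>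
      simp [hi, hj, hA, hA.symm]
  rw [Finset.sum_congr rfl (fun l _ => hpt l), Finset.sum_const, Finset.card_univ,
    Fintype.card_fin]
  simp [mul_comm]

end CodeConstr



lemma pair_eq_of_mem {m : ℕ} {t : Finset (Fin m)} (ht : t.card = 2) {i j : Fin m}
    (hij : i ≠ j) (hi : i ∈ t) (hj : j ∈ t) : t = {i, j} := by
  refine (Finset.eq_of_subset_of_card_le ?_ ?_).symm
  · intro x hx
    simp only [Finset.mem_insert, Finset.mem_singleton] at hx
    rcases hx with rfl | rfl <;> assumption
  · rw [ht, Finset.card_pair hij]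

lemma key {m : ℕ} (hm3 : 3 ≤ m) (hm4 : m ≠ 4) (v : OO m → ℚ)
    (hv : ∀ i j : Fin m, i ≠ j → ∑ t : OO m, v t * (D2 t.1 i j : ℚ) = 0) :
    ∀ t, v t = 0 := by
  classical
  set σ : Fin m → ℚ := fun a => ∑ t : OO m, if a ∈ t.1 then v t else 0 with hσ
  set vf : Finset (Fin m) → ℚ := fun s => if h : s.card = 2 then v ⟨s, h⟩ else 0 with hvf
  have hsum_ite : ∀ (i j : Fin m) (hij : i ≠ j),
      (∑ t : OO m, if t.1 = ({i, j} : Finset (Fin m)) then v t else 0) = vf {i, j} := by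
    intro i j hij
    have hc : ({i, j} : Finset (Fin m)).card = 2 := Finset.card_pair hij
    have : ∀ t : OO m, (if t.1 = ({i, j} : Finset (Fin m)) then v t else 0)
        = (if t = (⟨{i,j}, hc⟩ : OO m) then v t else 0) := by
      intro t; congr 1; simp [Subtype.ext_iff]
    rw [Finset.sum_congr rfl (fun t _ => this t), Finset.sum_ite_eq' Finset.univ]
    simp [hvf, hc]
  have step1 : ∀ i j : Fin m, i ≠ j → σ i + σ j - 2 * vf {i, j} = 0 := by
    intro i j hij
    have h0 := hv i j hij
    have hpt : ∀ t : OO m, v t * (D2 t.1 i j : ℚ) =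
        (if i ∈ t.1 then v t else 0) + (if j ∈ t.1 then v t else 0)
          - 2 * (if t.1 = ({i, j} : Finset (Fin m)) then v t else 0) := by
      intro t
      by_cases hi : i ∈ t.1 <;> by_cases hj : j ∈ t.1
      · have ht : t.1 = {i, j} := pair_eq_of_mem t.2 hij hi hj
        simp [D2, hi, hj, ht]; ring
      · have ht : t.1 ≠ {i, j} := fun h => hj (h ▸ by simp)
        simp [D2, hi, hj, ht]
      · have ht : t.1 ≠ {i, j} := fun h => hi (h ▸ by simp)
        simp [D2, hi, hj, ht]
      · have ht : t.1 ≠ {i, j} := fun h => hi (h ▸ by simp)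
        simp [D2, hi, hj, ht]
    rw [Finset.sum_congr rfl (fun t _ => hpt t)] at h0
    rw [Finset.sum_sub_distrib, Finset.sum_add_distrib, ← Finset.mul_sum, hsum_ite i j hij] at h0
    exact h0
  have step2 : ∀ a : Fin m, σ a = ∑ b ∈ Finset.univ.erase a, vf {a, b} := by
    intro a
    have hpt : ∀ t : OO m, (if a ∈ t.1 then v t else 0)
        = ∑ b ∈ Finset.univ.erase a, (if a ∈ t.1 ∧ b ∈ t.1 then v t else 0) := by
      intro t
      by_cases ha : a ∈ t.1
      · simp only [ha, true_and]
        rw [← Finset.sum_filter]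
        have hf : (Finset.univ.erase a).filter (· ∈ t.1) = t.1.erase a := by
          ext b; simp [Finset.mem_erase, and_comm]
        rw [hf, Finset.sum_const, Finset.card_erase_of_mem ha, t.2]
        simp
      · simp [ha]
    rw [hσ]
    simp only []
    rw [Finset.sum_congr rfl (fun t _ => hpt t), Finset.sum_comm]
    refine Finset.sum_congr rfl (fun b hb => ?_)
    have hba : a ≠ b := fun h => (Finset.mem_erase.1 hb).1 h.symm
    have hc : ({a, b} : Finset (Fin m)).card = 2 := Finset.card_pair hba
    have : ∀ t : OO m, (if a ∈ t.1 ∧ b ∈ t.1 then v t else 0)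
        = (if t = (⟨{a,b}, hc⟩ : OO m) then v t else 0) := by
      intro t
      congr 1
      simp only [Subtype.ext_iff, eq_iff_iff]
      constructor
      · rintro ⟨h1, h2⟩; exact pair_eq_of_mem t.2 hba h1 h2
      · rintro h; rw [h]; simp
    rw [Finset.sum_congr rfl (fun t _ => this t), Finset.sum_ite_eq' Finset.univ]
    simp [hvf, hc]
  -- algebra
  set T : ℚ := ∑ b : Fin m, σ b with hT
  have hm4' : ((m : ℚ) - 4) ≠ 0 := by
    intro h
    apply hm4
    have : (m : ℚ) = 4 := by linarith
    exact_mod_cast this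
  have hmain : ∀ a : Fin m, ((m : ℚ) - 4) * σ a + T = 0 := by
    intro a
    have h2 := step2 a
    have hrw : ∀ b ∈ Finset.univ.erase a, vf {a, b} = (σ a + σ b) / 2 := by
      intro b hb
      have hba : a ≠ b := fun h => (Finset.mem_erase.1 hb).1 h.symm
      have := step1 a b hba
      linarith
    rw [Finset.sum_congr rfl hrw] at h2
    have hcard : (Finset.univ.erase a).card = m - 1 := by
      rw [Finset.card_erase_of_mem (Finset.mem_univ a)]; simp
    have hsplit : ∑ b ∈ Finset.univ.erase a, (σ a + σ b) / 2
        = (((Finset.univ.erase a).card : ℚ) * σ a + (T - σ a)) / 2 := by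
      rw [← Finset.sum_div, Finset.sum_add_distrib, Finset.sum_const,
        Finset.sum_erase_eq_sub (Finset.mem_univ a), ← hT]
      simp
    rw [hsplit, hcard] at h2
    have hm1 : ((m - 1 : ℕ) : ℚ) = (m : ℚ) - 1 := by
      have : 1 ≤ m := by omega
      push_cast [this]; ring
    rw [hm1] at h2
    linarith
  have hTzero : T = 0 := by
    have hsum : ∑ a : Fin m, (((m : ℚ) - 4) * σ a + T) = 0 := by
      rw [Finset.sum_congr rfl (fun a _ => hmain a)]; simp
    rw [Finset.sum_add_distrib, ← Finset.mul_sum, ← hT, Finset.sum_const] at hsum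
    simp [Finset.card_univ] at hsum
    have hm3' : (3 : ℚ) ≤ (m : ℚ) := by exact_mod_cast hm3
    nlinarith
  have hσzero : ∀ a, σ a = 0 := by
    intro a
    have := hmain a
    rw [hTzero, add_zero] at this
    exact (mul_eq_zero.1 this).resolve_left hm4'
  intro t
  obtain ⟨i, j, hij, ht⟩ := Finset.card_eq_two.1 t.2
  have h1 := step1 i j hij
  rw [hσzero i, hσzero j] at h1
  have hvt : vf {i, j} = 0 := by linarith
  have : vf t.1 = v t := by
    rw [hvf]; simp only [t.2]; simp
  rw [← this, ht, hvt]


lemma compl_image {m : ℕ} (g : Equiv.Perm (Fin m)) (p : Finset (Fin m)) :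
    pᶜ.image ⇑g = (p.image ⇑g)ᶜ := by
  ext a
  constructor
  · intro h
    obtain ⟨b, hb, rfl⟩ := Finset.mem_image.1 h
    rw [Finset.mem_compl] at hb ⊢
    rwa [mem_image_perm]
  · intro h
    rw [Finset.mem_compl] at h
    refine Finset.mem_image.2 ⟨g.symm a, ?_, g.apply_symm_apply a⟩
    rw [Finset.mem_compl]
    intro hmem
    exact h (by simpa using Finset.mem_image_of_mem (⇑g) hmem)

end Aux

/-- For `m ≥ 5` or `m = 3` and any subgroup `H ≤ S(M)` closed under the action
on `P₂`, there is a code `C` of cardinality `m` with `Mon(C) = Iso(C) = H`. -/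
theorem exists_code_mon_eq_iso_eq {A : Type*} [Fintype A] [DecidableEq A]
    (hq : 2 ≤ Fintype.card A) {m : ℕ} (hm : 5 ≤ m ∨ m = 3)
    (H : Subgroup (Equiv.Perm (Fin m)))
    (hH : ClosedUnder permPart (P2set m) (H : Set (Equiv.Perm (Fin m)))) :
    ∃ n : ℕ, 0 < n ∧ ∃ lam : Fin m → Fin n → A, Function.Injective lam ∧
      MonSet lam = (H : Set (Equiv.Perm (Fin m))) ∧
      IsoSet lam = (H : Set (Equiv.Perm (Fin m))) := by
  classical
  have hm3 : 3 ≤ m := by rcases hm with h | h <;> omega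
  have hm4 : m ≠ 4 := by rcases hm with h | h <;> omega
  obtain ⟨a₀, a₁, hA⟩ := Fintype.exists_pair_of_one_lt_card (by omega : 1 < Fintype.card A)
  have hd := hamming_formula H a₀ a₁ hA
  set lam := lamC H a₀ a₁ with hlam
  -- H ⊆ Iso
  have hHIso : ∀ g ∈ H, g ∈ IsoSet lam := by
    intro g hg i j
    rw [hd, hd]
    rw [← Equiv.sum_comp (pairPerm g) (fun t : OO m => wgt H t.1 * D2 t.1 (g i) (g j))]
    refine Finset.sum_congr rfl (fun t _ => ?_)
    show wgt H (t.1.image g) * D2 (t.1.image g) (g i) (g j) = wgt H t.1 * D2 t.1 i j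
    rw [wgt_image H t.1 hg, D2_image]
  -- H ⊆ Mon
  have hHMon : (H : Set (Equiv.Perm (Fin m))) ⊆ MonSet lam := by
    intro g hg
    refine ⟨hHIso g hg, ?_⟩
    set X : (Σ p : OO m, Fin (wgt H p.1)) ≃ (Σ p : OO m, Fin (wgt H p.1)) :=
      Equiv.sigmaCongr (pairPerm g⁻¹)
        (fun p => finCongr (by
          show wgt H p.1 = wgt H (p.1.image ⇑g⁻¹)
          exact (wgt_image H p.1 (H.inv_mem hg)).symm)) with hX
    set π : Fin (nn H) ≃ Fin (nn H) := (ee H).symm.trans (X.trans (ee H)) with hπ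
    refine ⟨fun a k => a (π k), ⟨π, fun _ => 1, fun a k => rfl⟩, ?_⟩
    intro i
    funext k
    have hfst : ((ee H).symm (π k)).1.1 = ((ee H).symm k).1.1.image ⇑g⁻¹ := by
      rw [hπ]
      simp only [Equiv.trans_apply, Equiv.symm_apply_apply]
      rcases (ee H).symm k with ⟨p, l⟩
      rfl
    show lamC H a₀ a₁ i (π k) = lamC H a₀ a₁ (g i) k
    unfold lamC
    rw [hfst]
    congr 1
    rw [eq_iff_iff]
    constructor
    · intro hmem
      have : g⁻¹ (g i) ∈ ((ee H).symm k).1.1.image ⇑g⁻¹ := by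
        simpa using hmem
      rwa [mem_image_perm] at this
    · intro hmem
      have := (mem_image_perm g⁻¹ (g i)).2 hmem
      simpa using this
  -- Iso ⊆ H
  have hIsoH : IsoSet lam ⊆ (H : Set (Equiv.Perm (Fin m))) := by
    intro g hg
    have hw : ∀ t : OO m, wgt H (t.1.image ⇑g) = wgt H t.1 := by
      set v : OO m → ℚ := fun t => (wgt H (t.1.image ⇑g) : ℚ) - wgt H t.1 with hv
      have hveq : ∀ t, v t = 0 := by
        refine key hm3 hm4 v (fun i j hij => ?_)
        have h0 := hg i j
        rw [hd, hd] at h0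
        rw [← Equiv.sum_comp (pairPerm g)
          (fun t : OO m => wgt H t.1 * D2 t.1 (g i) (g j))] at h0
        have h1 : ∑ t : OO m, wgt H (t.1.image ⇑g) * D2 t.1 i j
            = ∑ t : OO m, wgt H t.1 * D2 t.1 i j := by
          rw [← h0]
          refine Finset.sum_congr rfl (fun t _ => ?_)
          show wgt H (t.1.image ⇑g) * D2 t.1 i j
            = wgt H ((pairPerm g t).1) * D2 ((pairPerm g t).1) (g i) (g j)
          show _ = wgt H (t.1.image ⇑g) * D2 (t.1.image ⇑g) (g i) (g j)
          rw [D2_image]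
        have h2 : ((∑ t : OO m, wgt H (t.1.image ⇑g) * D2 t.1 i j : ℕ) : ℚ)
            = ((∑ t : OO m, wgt H t.1 * D2 t.1 i j : ℕ) : ℚ) := by exact_mod_cast h1
        push_cast at h2
        rw [hv]
        simp only [sub_mul]
        rw [Finset.sum_sub_distrib, h2, sub_self]
      intro t
      have h3 : (wgt H (t.1.image ⇑g) : ℚ) - wgt H t.1 = 0 := hveq t
      have h4 : ((wgt H (t.1.image ⇑g) : ℚ)) = (wgt H t.1 : ℚ) := by linarith
      exact_mod_cast h4
    apply hH
    intro α hα
    obtain ⟨p, hp2, rfl⟩ := hα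
    have horb := orb_eq_of_wgt_eq H (hw ⟨p, hp2⟩)
    have hmem : p.image ⇑g ∈ orb H p := by
      rw [← horb]
      exact mem_orb_self H _
    obtain ⟨h, hh, hhg⟩ := (mem_orb H p _).1 hmem
    refine ⟨h, hh, ?_⟩
    have himg : ∀ f : Equiv.Perm (Fin m),
        permPart f {p, pᶜ} = {p.image ⇑f, (p.image ⇑f)ᶜ} := by
      intro f
      unfold permPart
      rw [Finset.image_insert, Finset.image_singleton, compl_image]
    rw [himg g, himg h, hhg]
  refine ⟨nn H, ?_, lam, ?_, ?_, ?_⟩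
  · have hne : (⟨0, by omega⟩ : Fin m) ≠ ⟨1, by omega⟩ := by
      intro h
      have := congrArg Fin.val h
      simp at this
    refine Finset.sum_pos (fun p _ => wgt_pos H p.1)
      ⟨⟨{⟨0, by omega⟩, ⟨1, by omega⟩}, Finset.card_pair hne⟩, Finset.mem_univ _⟩
  · intro i j hij
    by_contra hne
    have h0 : hammingDist (lam i) (lam j) = 0 := by rw [hij, hammingDist_self]
    rw [hd] at h0
    have hcompl : ((({i, j} : Finset (Fin m))ᶜ).Nonempty) := by
      rw [← Finset.card_pos, Finset.card_compl]
      have : ({i, j} : Finset (Fin m)).card ≤ 2 := Finset.card_insert_le _ _ |>.trans (by simp)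
      simp only [Fintype.card_fin]
      omega
    obtain ⟨c, hc⟩ := hcompl
    rw [Finset.mem_compl, Finset.mem_insert, Finset.mem_singleton] at hc
    push_neg at hc
    have hic : i ≠ c := fun h => hc.1 h.symm
    have ht0 : D2 ({i, c} : Finset (Fin m)) i j = 1 := by
      have hi : i ∈ ({i, c} : Finset (Fin m)) := by simp
      have hj : j ∈ ({i, c} : Finset (Fin m)) → False := by
        intro h
        rcases Finset.mem_insert.1 h with h | h
        · exact hne h.symm
        · exact hc.2 ((Finset.mem_singleton.1 h).symm)
      unfold D2
      rw [if_neg]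
      intro hiff
      exact hj (hiff.1 hi)
    have hz := (Finset.sum_eq_zero_iff.1 h0) ⟨{i, c}, Finset.card_pair hic⟩ (Finset.mem_univ _)
    rw [ht0, mul_one] at hz
    have hz' : wgt H ({i, c} : Finset (Fin m)) = 0 := hz
    have hpos := wgt_pos H ({i, c} : Finset (Fin m))
    omega
  · exact Set.Subset.antisymm (fun g hg => hIsoH hg.1) hHMon
  · exact Set.Subset.antisymm hIsoH (fun g hg => hHIso g hg)
end

section
/- Let C ⊆ A^n be a code of cardinality m ≥ 3 with encoding bijection λ : M → C, and let f : C → A^n be any map. Then f is a Hamming isometry if and only if W(η_λ) = W(η_{f∘λ}). -/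
lemma PsiF_mem_Pset {m : ℕ} {A : Type*} [Fintype A] [DecidableEq A] (x : Fin m → A) :
    PsiF x ∈ Pset m (Fintype.card A) := by
  classical
  refine ⟨⟨?_, ?_⟩, ?_⟩
  · intro c hc
    exact Finset.nonempty_iff_ne_empty.2 (Finset.ne_of_mem_erase hc)
  · intro i
    refine ⟨Finset.univ.filter fun j => x j = x i, ⟨?_, ?_⟩, ?_⟩
    · refine Finset.mem_erase.2 ⟨?_, Finset.mem_image.2 ⟨x i, Finset.mem_univ _, rfl⟩⟩
      intro h
      have : i ∈ (Finset.univ.filter fun j => x j = x i) := by simp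
      rw [h] at this; simp at this
    · simp
    · rintro c ⟨hc, hic⟩
      obtain ⟨a, -, rfl⟩ := Finset.mem_image.1 (Finset.mem_of_mem_erase hc)
      have : x i = a := (Finset.mem_filter.1 hic).2
      subst this
      rfl
  · calc (PsiF x).card ≤ (Finset.univ.image fun a : A =>
          Finset.univ.filter fun i : Fin m => x i = a).card := Finset.card_erase_le
    _ ≤ (Finset.univ : Finset A).card := Finset.card_image_le
    _ = Fintype.card A := rfl

lemma delta_PsiF {m : ℕ} {A : Type*} [Fintype A] [DecidableEq A] (x : Fin m → A)
    (p : OO m) (i j : Fin m) (hp : p.1 = {i, j}) {q : ℕ}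
    (hmem : PsiF x ∈ Pset m q) :
    Delta (⟨PsiF x, hmem⟩ : PP m q) p = if x i = x j then 0 else 1 := by
  classical
  unfold Delta
  have hiff : (∃ c ∈ PsiF x, p.1 ⊆ c) ↔ x i = x j := by
    constructor
    · rintro ⟨c, hc, hsub⟩
      obtain ⟨a, -, rfl⟩ := Finset.mem_image.1 (Finset.mem_of_mem_erase hc)
      have hi : i ∈ p.1 := by rw [hp]; simp
      have hj : j ∈ p.1 := by rw [hp]; simp
      have h1 := (Finset.mem_filter.1 (hsub hi)).2
      have h2 := (Finset.mem_filter.1 (hsub hj)).2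
      rw [h1, h2]
    · intro h
      refine ⟨Finset.univ.filter fun k => x k = x i, ?_, ?_⟩
      · refine Finset.mem_erase.2 ⟨?_, Finset.mem_image.2 ⟨x i, Finset.mem_univ _, rfl⟩⟩
        intro hc
        have : i ∈ (Finset.univ.filter fun k => x k = x i) := by simp
        rw [hc] at this; simp at this
      · rw [hp]
        intro k hk
        rcases Finset.mem_insert.1 hk with rfl | hk
        · simp
        · rw [Finset.mem_singleton.1 hk]
          simp [h.symm]
  by_cases h : x i = x j
  · rw [if_pos (hiff.2 h), if_pos h]
  · rw [if_neg (fun hc => h (hiff.1 hc)), if_neg h]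

lemma W_eta_eq_dist {m n : ℕ} {A : Type*} [Fintype A] [DecidableEq A]
    (μ : Fin m → Fin n → A) (p : OO m) (i j : Fin m) (hp : p.1 = {i, j}) :
    WLin m (Fintype.card A) (etaP (Fintype.card A) μ) p
      = (hammingDist (μ i) (μ j) : ℚ) := by
  classical
  set q := Fintype.card A with hq
  let Φ : Fin n → PP m q := fun k => ⟨PsiF fun i => μ i k, PsiF_mem_Pset _⟩
  have hstep : ∀ α : PP m q, etaP q μ α * Delta α p
      = ∑ k ∈ Finset.univ.filter (fun k => Φ k = α), Delta (Φ k) p := by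
    intro α
    have hfil : (Finset.univ.filter fun k : Fin n => PsiF (fun i => μ i k) = α.1)
        = Finset.univ.filter (fun k => Φ k = α) := by
      ext k
      simp only [Finset.mem_filter, Finset.mem_univ, true_and, Φ, Subtype.ext_iff]
    rw [Finset.sum_congr rfl (fun k hk => by rw [(Finset.mem_filter.1 hk).2])]
    simp only [etaP, eta, hfil, Finset.sum_const, nsmul_eq_mul, mul_one, mul_comm]
  have hsum : WLin m q (etaP q μ) p = ∑ k : Fin n, Delta (Φ k) p := by
    show (∑ α : PP m q, etaP q μ α * Delta α p) = _
    rw [Finset.sum_congr rfl fun α _ => hstep α]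
    exact Finset.sum_fiberwise _ _ _
  rw [hsum]
  have hdk : ∀ k : Fin n, Delta (Φ k) p = if μ i k = μ j k then 0 else 1 := fun k =>
    delta_PsiF _ p i j hp _
  have hflip : ∀ k : Fin n, Delta (Φ k) p = if μ i k ≠ μ j k then 1 else 0 := by
    intro k
    rw [hdk k]
    by_cases h : μ i k = μ j k <;> simp [h]
  rw [Finset.sum_congr rfl fun k _ => hflip k, Finset.sum_boole]
  rfl

/-- a map `f : C → Aⁿ` is a Hamming isometry iff `W(η_λ) = W(η_{f∘λ})`. -/
theorem isometry_iff_W_eq {A : Type*} [Fintype A] [DecidableEq A]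
    (hq : 2 ≤ Fintype.card A) {m n : ℕ} (hm : 3 ≤ m) (hn : 0 < n)
    (lam : Fin m → Fin n → A) (hlam : Function.Injective lam)
    (f : Set.range lam → (Fin n → A)) :
    (∀ a b : Set.range lam, hammingDist (f a) (f b) = hammingDist (a : Fin n → A) (b : Fin n → A))
      ↔ WLin m (Fintype.card A) (etaP (Fintype.card A) lam) =
        WLin m (Fintype.card A)
          (etaP (Fintype.card A) fun i => f ⟨lam i, Set.mem_range_self i⟩) := by
  classical
  constructor
  · intro hiso
    funext p
    obtain ⟨i, j, hij, hp⟩ := Finset.card_eq_two.1 p.2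
    rw [W_eta_eq_dist lam p i j hp, W_eta_eq_dist _ p i j hp,
      hiso ⟨lam i, Set.mem_range_self i⟩ ⟨lam j, Set.mem_range_self j⟩]
  · intro hW a b
    obtain ⟨i, hi⟩ := a.2
    obtain ⟨j, hj⟩ := b.2
    have ha : a = ⟨lam i, Set.mem_range_self i⟩ := Subtype.ext hi.symm
    have hb : b = ⟨lam j, Set.mem_range_self j⟩ := Subtype.ext hj.symm
    subst ha hb
    by_cases hij : i = j
    · subst hij; simp
    · have hp2 : ({i, j} : Finset (Fin m)).card = 2 := Finset.card_pair hij
      have h := congrFun hW ⟨{i, j}, hp2⟩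
      rw [W_eta_eq_dist lam ⟨{i, j}, hp2⟩ i j rfl,
        W_eta_eq_dist _ ⟨{i, j}, hp2⟩ i j rfl] at h
      exact_mod_cast h.symm
end
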